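/- arXiv:math/0309377 — 3 statements merged into one kernel-verified Lean document; each statement's English description precedes it below -/
import Mathlib

section
/- Let n ≥ 2. For every point p ∈ ℂⁿ and every vector v ∈ ℂⁿ there exist a real number λ > 0 and a proper holomorphic map f : 𝔻 → ℂⁿ such that f(0) = p and f'(0) = λ·v. -/
noncomputable section ProperDiscAux

/-- radii increasing to 1 -/
def rr (m : ℕ) : ℝ := 1 - 1/(m+2)

lemma rr_lt_one (m : ℕ) : rr m < 1 := by
  have : (0:ℝ) < 1/(m+2) := by positivity
  simp only [rr]; linarith

lemma half_le_rr (m : ℕ) : (1/2 : ℝ) ≤ rr m := by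
  have h2 : (2:ℝ) ≤ (m:ℝ) + 2 := by
    have : (0:ℝ) ≤ (m:ℝ) := Nat.cast_nonneg m
    linarith
  have : 1/((m:ℝ)+2) ≤ 1/2 := by
    apply one_div_le_one_div_of_le <;> linarith
  simp only [rr]; linarith

lemma rr_pos (m : ℕ) : (0:ℝ) < rr m := lt_of_lt_of_le (by norm_num) (half_le_rr m)

lemma rr_mono : StrictMono rr := by
  intro a b hab
  have ha : ((a:ℝ)+2) < ((b:ℝ)+2) := by exact_mod_cast by omega
  have h0 : (0:ℝ) < (a:ℝ)+2 := by positivity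
  have : 1/((b:ℝ)+2) < 1/((a:ℝ)+2) := by
    apply one_div_lt_one_div_of_lt h0 ha
  simp only [rr]; linarith

lemma rr_tendsto {x : ℝ} (hx : x < 1) : ∃ m₁ : ℕ, ∀ m ≥ m₁, x ≤ rr m := by
  obtain ⟨k, hk⟩ := exists_nat_gt (1/(1-x))
  refine ⟨k, fun m hm => ?_⟩
  have h1x : (0:ℝ) < 1 - x := by linarith
  have hkm : (1/(1-x) : ℝ) < (m:ℝ) + 2 := by
    have : (k:ℝ) ≤ (m:ℝ) := by exact_mod_cast hm
    linarith
  have h0 : (0:ℝ) < (m:ℝ) + 2 := by positivity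
  have : 1/((m:ℝ)+2) < 1 - x := by
    rw [div_lt_iff₀ h0]
    rw [div_lt_iff₀ h1x] at hkm
    linarith [hkm]
  simp only [rr]; linarith

/-- one stage of the construction -/
lemma stage (m : ℕ) (C : ℝ) :
    ∃ (c : ℝ) (N : ℕ), 0 ≤ c ∧ 2 ≤ N ∧ c * rr m ^ N ≤ (1/2:ℝ)^m ∧
      C ≤ c * rr (m+1) ^ N := by
  set D : ℝ := max C 1 with hD
  have hD1 : (1:ℝ) ≤ D := le_max_right _ _
  have hD0 : (0:ℝ) < D := by linarith
  set ρ : ℝ := rr m / rr (m+1) with hρ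
  have hρ0 : 0 < ρ := div_pos (rr_pos m) (rr_pos (m+1))
  have hρ1 : ρ < 1 := by
    rw [hρ, div_lt_one (rr_pos (m+1))]
    exact rr_mono (by omega)
  obtain ⟨n, hn⟩ := exists_pow_lt_of_lt_one (x := (1/2:ℝ)^m / D) (by positivity) hρ1
  set N : ℕ := max n 2 with hN
  have hρN : ρ ^ N ≤ (1/2:ℝ)^m / D := by
    calc ρ ^ N ≤ ρ ^ n := pow_le_pow_of_le_one hρ0.le hρ1.le (le_max_left _ _)
    _ ≤ _ := hn.le
  have hr1 : (0:ℝ) < rr (m+1) ^ N := pow_pos (rr_pos _) N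
  refine ⟨D / rr (m+1) ^ N, N, le_of_lt (div_pos hD0 hr1), le_max_right _ _, ?_, ?_⟩
  · have : D / rr (m+1) ^ N * rr m ^ N = D * ρ ^ N := by
      rw [hρ, div_pow]; field_simp
    rw [this]
    calc D * ρ ^ N ≤ D * ((1/2:ℝ)^m / D) := by
          exact mul_le_mul_of_nonneg_left hρN hD0.le
    _ = (1/2:ℝ)^m := by field_simp
  · have : D / rr (m+1) ^ N * rr (m+1) ^ N = D := by field_simp
    rw [this]; exact le_max_left _ _


/-- data of one stage -/
def step (m : ℕ) (σ : ℝ) : ℝ × ℕ :=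
  ⟨(stage m (m + σ + 2)).choose, (stage m (m + σ + 2)).choose_spec.choose⟩

lemma step_spec (m : ℕ) (σ : ℝ) :
    0 ≤ (step m σ).1 ∧ 2 ≤ (step m σ).2 ∧
      (step m σ).1 * rr m ^ (step m σ).2 ≤ (1/2:ℝ)^m ∧
      (m + σ + 2 : ℝ) ≤ (step m σ).1 * rr (m+1) ^ (step m σ).2 :=
  (stage m (m + σ + 2)).choose_spec.choose_spec

/-- partial sums of the coefficients -/
def sig : ℕ → ℝ
  | 0 => 0
  | m+1 => sig m + (step m (sig m)).1

def cc (m : ℕ) : ℝ := (step m (sig m)).1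
def NN (m : ℕ) : ℕ := (step m (sig m)).2

lemma sig_succ (m : ℕ) : sig (m+1) = sig m + cc m := rfl

lemma cc_nonneg (m : ℕ) : 0 ≤ cc m := (step_spec m (sig m)).1

lemma two_le_NN (m : ℕ) : 2 ≤ NN m := (step_spec m (sig m)).2.1

lemma cc_small (m : ℕ) : cc m * rr m ^ NN m ≤ (1/2:ℝ)^m := (step_spec m (sig m)).2.2.1

lemma cc_big (m : ℕ) : (m + sig m + 2 : ℝ) ≤ cc m * rr (m+1) ^ NN m :=
  (step_spec m (sig m)).2.2.2

lemma sig_eq (m : ℕ) : sig m = ∑ j ∈ Finset.range m, cc j := by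
  induction m with
  | zero => simp [sig]
  | succ k ih => rw [sig_succ, ih, Finset.sum_range_succ]

/-- the coefficients of the two series -/
def aa (i m : ℕ) : ℝ := if m % 2 = i then cc m else 0

lemma aa_nonneg (i m : ℕ) : 0 ≤ aa i m := by
  unfold aa; split <;> simp [cc_nonneg]

lemma aa_le_cc (i m : ℕ) : aa i m ≤ cc m := by
  unfold aa; split
  · exact le_rfl
  · exact cc_nonneg m


/-! ### The two series -/

def hh (i : ℕ) (z : ℂ) : ℂ := ∑' m, (aa i m : ℂ) * z ^ (NN m - 2)

def gg (i : ℕ) (z : ℂ) : ℂ := z ^ 2 * hh i z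

lemma cc_small' (m : ℕ) : cc m * rr m ^ (NN m - 2) ≤ 4 * (1/2:ℝ)^m := by
  have h2 : rr m ^ (NN m - 2) * rr m ^ 2 = rr m ^ NN m := by
    rw [← pow_add, Nat.sub_add_cancel (two_le_NN m)]
  have hr : (1/4:ℝ) ≤ rr m ^ 2 := by
    have := half_le_rr m
    nlinarith [rr_pos m]
  have h3 : cc m * rr m ^ (NN m - 2) * (1/4:ℝ) ≤ cc m * rr m ^ (NN m - 2) * rr m ^ 2 := by
    have : (0:ℝ) ≤ cc m * rr m ^ (NN m - 2) :=
      mul_nonneg (cc_nonneg m) (pow_nonneg (rr_pos m).le _)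
    exact mul_le_mul_of_nonneg_left hr this
  have h4 : cc m * rr m ^ (NN m - 2) * rr m ^ 2 ≤ (1/2:ℝ)^m := by
    rw [mul_assoc, h2]; exact cc_small m
  linarith

lemma summable_pow {ρ : ℝ} (h0 : 0 ≤ ρ) (h1 : ρ < 1) :
    Summable (fun m => cc m * ρ ^ (NN m - 2)) := by
  obtain ⟨m₁, hm₁⟩ := rr_tendsto h1
  apply Summable.of_norm_bounded_eventually_nat (g := fun m => 4 * (1/2:ℝ)^m)
    ((summable_geometric_of_lt_one (by norm_num) (by norm_num)).mul_left 4)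
  filter_upwards [Filter.eventually_ge_atTop m₁] with m hm
  have hρr : ρ ≤ rr m := hm₁ m hm
  have h5 : ρ ^ (NN m - 2) ≤ rr m ^ (NN m - 2) := pow_le_pow_left₀ h0 hρr _
  have h6 : cc m * ρ ^ (NN m - 2) ≤ cc m * rr m ^ (NN m - 2) :=
    mul_le_mul_of_nonneg_left h5 (cc_nonneg m)
  have h7 : (0:ℝ) ≤ cc m * ρ ^ (NN m - 2) := mul_nonneg (cc_nonneg m) (pow_nonneg h0 _)
  rw [Real.norm_of_nonneg h7]
  exact h6.trans (cc_small' m)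

lemma term_norm_le (i m : ℕ) {z : ℂ} {ρ : ℝ} (hz : ‖z‖ ≤ ρ) :
    ‖(aa i m : ℂ) * z ^ (NN m - 2)‖ ≤ cc m * ρ ^ (NN m - 2) := by
  rw [norm_mul, Complex.norm_real, norm_pow, Real.norm_of_nonneg (aa_nonneg i m)]
  exact mul_le_mul (aa_le_cc i m) (pow_le_pow_left₀ (norm_nonneg z) hz _)
    (by positivity) (cc_nonneg m)

lemma hh_differentiableOn (i : ℕ) :
    DifferentiableOn ℂ (hh i) (Metric.ball (0:ℂ) 1) := by
  intro z hz
  simp only [Metric.mem_ball, dist_zero_right] at hz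
  set ρ : ℝ := (‖z‖ + 1) / 2 with hρdef
  have hρ0 : 0 ≤ ρ := by positivity
  have hρ1 : ρ < 1 := by simp only [hρdef]; linarith
  have hzρ : z ∈ Metric.ball (0:ℂ) ρ := by
    simp only [Metric.mem_ball, dist_zero_right, hρdef]; linarith
  have hdiff : DifferentiableOn ℂ (hh i) (Metric.ball (0:ℂ) ρ) := by
    apply Complex.differentiableOn_tsum_of_summable_norm (summable_pow hρ0 hρ1)
    · intro m
      apply DifferentiableOn.mul (differentiableOn_const _)
      exact (differentiable_pow _).differentiableOn
    · exact Metric.isOpen_ball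
    · intro m w hw
      simp only [Metric.mem_ball, dist_zero_right] at hw
      exact term_norm_le i m hw.le
  exact ((hdiff z hzρ).differentiableAt (Metric.isOpen_ball.mem_nhds hzρ)).differentiableWithinAt

lemma summable_term (i : ℕ) {z : ℂ} (hz : ‖z‖ < 1) :
    Summable (fun m => (aa i m : ℂ) * z ^ NN m) := by
  apply Summable.of_norm_bounded (g := fun m => cc m * ‖z‖ ^ (NN m - 2))
    (summable_pow (norm_nonneg z) hz)
  intro m
  rw [norm_mul, Complex.norm_real, norm_pow, Real.norm_of_nonneg (aa_nonneg i m)]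
  have : ‖z‖ ^ NN m ≤ ‖z‖ ^ (NN m - 2) :=
    pow_le_pow_of_le_one (norm_nonneg z) hz.le (Nat.sub_le _ _)
  exact mul_le_mul (aa_le_cc i m) this (by positivity) (cc_nonneg m)

lemma gg_tsum (i : ℕ) (z : ℂ) : gg i z = ∑' m, (aa i m : ℂ) * z ^ NN m := by
  unfold gg hh
  rw [← tsum_mul_left]
  apply tsum_congr
  intro m
  rw [show z ^ NN m = z ^ (NN m - 2) * z ^ 2 by
    rw [← pow_add, Nat.sub_add_cancel (two_le_NN m)]]
  ring


/-- The key lower bound: on the annulus `rr (m+1) ≤ |z| ≤ rr (m+2)`, the series of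
parity `m % 2` has modulus at least `m`. -/
lemma gg_big (m : ℕ) (z : ℂ) (h1 : rr (m+1) ≤ ‖z‖) (h2 : ‖z‖ ≤ rr (m+2)) :
    (m : ℝ) ≤ ‖gg (m % 2) z‖ := by
  classical
  set i := m % 2 with hi
  have hz1 : ‖z‖ < 1 := lt_of_le_of_lt h2 (rr_lt_one _)
  have hz0 : (0:ℝ) ≤ ‖z‖ := norm_nonneg z
  set F : ℕ → ℂ := fun j => (aa i j : ℂ) * z ^ NN j with hF
  have hsum : Summable F := summable_term i hz1
  -- pointwise bound for the non-principal terms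
  set B : ℕ → ℝ := fun j => if j < m then cc j else (1/2:ℝ)^j with hB
  have hbound : ∀ j, ‖(if j = m then (0:ℂ) else F j)‖ ≤ B j := by
    intro j
    by_cases hjm : j = m
    · simp only [hjm, if_pos]
      simp only [norm_zero, hB]
      rw [if_neg (lt_irrefl m)]
      positivity
    · rw [if_neg hjm]
      have hFj : ‖F j‖ = aa i j * ‖z‖ ^ NN j := by
        rw [hF, norm_mul, Complex.norm_real, norm_pow, Real.norm_of_nonneg (aa_nonneg i j)]
      rcases lt_or_gt_of_ne hjm with hlt | hgt
      · -- j < m : bound by cc j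
        simp only [hB, if_pos hlt]
        rw [hFj]
        calc aa i j * ‖z‖ ^ NN j ≤ cc j * 1 :=
              mul_le_mul (aa_le_cc i j) (pow_le_one₀ hz0 hz1.le)
                (pow_nonneg hz0 _) (cc_nonneg j)
        _ = cc j := mul_one _
      · -- j > m
        simp only [hB, if_neg (by omega : ¬ j < m)]
        rw [hFj]
        by_cases hpar : j % 2 = i
        · -- same parity, so j ≥ m + 2
          have hj2 : m + 2 ≤ j := by omega
          have hrj : ‖z‖ ≤ rr j := h2.trans (by
            rcases eq_or_lt_of_le hj2 with h | h
            · rw [h]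
            · exact (rr_mono h).le)
          calc aa i j * ‖z‖ ^ NN j ≤ cc j * rr j ^ NN j :=
                mul_le_mul (aa_le_cc i j) (pow_le_pow_left₀ hz0 hrj _)
                  (pow_nonneg hz0 _) (cc_nonneg j)
          _ ≤ (1/2:ℝ)^j := cc_small j
        · have : aa i j = 0 := by simp only [aa, if_neg hpar]
          rw [this]
          simp only [zero_mul]
          positivity
  have hBsum : Summable B := by
    apply Summable.of_norm_bounded
      (g := fun j => (if j < m then cc j else 0) + (1/2:ℝ)^j)
    · exact Summable.add
        (summable_of_ne_finset_zero (s := Finset.range m)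
          (by intro b hb; rw [if_neg (by simpa using hb)]))
        (summable_geometric_of_lt_one (by norm_num) (by norm_num))
    · intro j
      have hp : (0:ℝ) ≤ (1/2:ℝ)^j := by positivity
      have hBj : 0 ≤ B j := by
        by_cases hj : j < m
        · simp only [hB, if_pos hj]; exact cc_nonneg j
        · simp only [hB, if_neg hj]; positivity
      rw [Real.norm_of_nonneg hBj]
      by_cases hj : j < m
      · simp only [hB, if_pos hj]; linarith
      · simp only [hB, if_neg hj]; linarith
  have hTsum : Summable (fun j => if j = m then (0:ℂ) else F j) := by
    apply Summable.of_norm_bounded (g := B) hBsum hbound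
  -- bound the tail
  have hT : ‖∑' j, (if j = m then (0:ℂ) else F j)‖ ≤ sig m + 2 := by
    have h8 : ‖∑' j, (if j = m then (0:ℂ) else F j)‖ ≤ ∑' j, B j :=
      tsum_of_norm_bounded hBsum.hasSum hbound
    have h9 : ∑' j, B j ≤ sig m + 2 := by
      have hle : ∀ j, B j ≤ (if j < m then cc j else 0) + (1/2:ℝ)^j := by
        intro j
        have hp : (0:ℝ) ≤ (1/2:ℝ)^j := by positivity
        by_cases hj : j < m
        · simp only [hB, if_pos hj]; linarith
        · simp only [hB, if_neg hj]; linarith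
      have hs1 : Summable (fun j => if j < m then cc j else (0:ℝ)) :=
        summable_of_ne_finset_zero (s := Finset.range m)
          (by intro b hb; rw [if_neg (by simpa using hb)])
      have hs2 : Summable (fun j => (1/2:ℝ)^j) :=
        summable_geometric_of_lt_one (by norm_num) (by norm_num)
      calc ∑' j, B j ≤ ∑' j, ((if j < m then cc j else 0) + (1/2:ℝ)^j) :=
            Summable.tsum_le_tsum hle hBsum (hs1.add hs2)
      _ = (∑' j, (if j < m then cc j else (0:ℝ))) + ∑' j, (1/2:ℝ)^j :=
            Summable.tsum_add hs1 hs2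
      _ = sig m + 2 := by
            rw [tsum_eq_sum (s := Finset.range m)
              (by intro b hb; rw [if_neg (by simpa using hb)])]
            rw [tsum_geometric_of_lt_one (by norm_num) (by norm_num)]
            rw [sig_eq]
            norm_num
            apply Finset.sum_congr rfl
            intro x hx
            rw [if_pos (Finset.mem_range.mp hx)]
    exact h8.trans h9
  -- the principal term is big
  have hmain : (m : ℝ) + sig m + 2 ≤ ‖F m‖ := by
    have hamm : aa i m = cc m := by simp [aa, hi]
    have : ‖F m‖ = cc m * ‖z‖ ^ NN m := by
      rw [hF, norm_mul, Complex.norm_real, norm_pow, Real.norm_of_nonneg (aa_nonneg i m), hamm]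
    rw [this]
    calc (m:ℝ) + sig m + 2 ≤ cc m * rr (m+1) ^ NN m := cc_big m
    _ ≤ cc m * ‖z‖ ^ NN m :=
        mul_le_mul_of_nonneg_left (pow_le_pow_left₀ (rr_pos _).le h1 _) (cc_nonneg m)
  -- assemble
  rw [gg_tsum]
  rw [show (∑' k, (aa i k : ℂ) * z ^ NN k) = ∑' k, F k from rfl,
    Summable.tsum_eq_add_tsum_ite hsum m]
  set T := ∑' j, (if j = m then (0:ℂ) else F j) with hTdef
  have htri : ‖F m‖ ≤ ‖F m + T‖ + ‖T‖ := by
    calc ‖F m‖ = ‖(F m + T) + (-T)‖ := by ring_nf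
    _ ≤ ‖F m + T‖ + ‖-T‖ := norm_add_le _ _
    _ = ‖F m + T‖ + ‖T‖ := by rw [norm_neg]
  have : (m:ℝ) ≤ ‖F m + T‖ := by linarith
  exact this


lemma coord_le_norm {n : ℕ} (x : EuclideanSpace ℂ (Fin n)) (j : Fin n) :
    ‖x j‖ ≤ ‖x‖ := by
  rw [EuclideanSpace.norm_eq]
  have h1 : ‖x j‖ ^ 2 ≤ ∑ i : Fin n, ‖x i‖ ^ 2 :=
    Finset.single_le_sum (f := fun i => ‖x i‖ ^ 2) (fun i _ => by positivity)
      (Finset.mem_univ j)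
  calc ‖x j‖ = Real.sqrt (‖x j‖ ^ 2) := by rw [Real.sqrt_sq (norm_nonneg _)]
  _ ≤ _ := Real.sqrt_le_sqrt h1

end ProperDiscAux

/-- A map, viewed as a map from the open unit disc `𝔻 ⊆ ℂ` to `ℂⁿ`, is proper if the
preimage of every compact set is a compact subset of `𝔻`. -/
def ProperOnDisc {n : ℕ} (f : ℂ → EuclideanSpace ℂ (Fin n)) : Prop :=
  ∀ K : Set (EuclideanSpace ℂ (Fin n)), IsCompact K →
    IsCompact {ζ : ℂ | ζ ∈ Metric.ball (0 : ℂ) 1 ∧ f ζ ∈ K}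

/-- a proper holomorphic disc in `ℂⁿ` through any prescribed point, with
prescribed tangent direction. -/
theorem proper_disc_through_point
    (n : ℕ) (hn : 2 ≤ n)
    (p : EuclideanSpace ℂ (Fin n)) (v : EuclideanSpace ℂ (Fin n)) :
    ∃ (lam : ℝ) (f : ℂ → EuclideanSpace ℂ (Fin n)),
      0 < lam ∧
      DifferentiableOn ℂ f (Metric.ball (0 : ℂ) 1) ∧
      ProperOnDisc f ∧
      f 0 = p ∧
      deriv f 0 = lam • v := by
  classical
  set i0 : Fin n := ⟨0, by omega⟩ with hi0
  set i1 : Fin n := ⟨1, by omega⟩ with hi1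
  have hi01 : i1 ≠ i0 := by
    simp only [hi0, hi1, ne_eq, Fin.mk.injEq]
    omega
  set E0 : EuclideanSpace ℂ (Fin n) := EuclideanSpace.single i0 1 with hE0
  set E1 : EuclideanSpace ℂ (Fin n) := EuclideanSpace.single i1 1 with hE1
  set f : ℂ → EuclideanSpace ℂ (Fin n) :=
    fun z => p + z • v + gg 0 z • E0 + gg 1 z • E1 with hf
  have hgdiff : ∀ i, DifferentiableOn ℂ (gg i) (Metric.ball (0:ℂ) 1) := by
    intro i
    exact ((differentiable_pow 2).differentiableOn).mul (hh_differentiableOn i)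
  have hfdiff : DifferentiableOn ℂ f (Metric.ball (0:ℂ) 1) := by
    apply DifferentiableOn.add
    apply DifferentiableOn.add
    apply DifferentiableOn.add
    · exact differentiableOn_const p
    · exact (differentiable_id.smul_const v).differentiableOn
    · exact (hgdiff 0).smul_const E0
    · exact (hgdiff 1).smul_const E1
  -- value at 0
  have hgg0 : ∀ i, gg i 0 = 0 := by
    intro i; simp [gg]
  have hf0 : f 0 = p := by
    simp [hf, hgg0]
  -- derivative at 0
  have hball0 : (0:ℂ) ∈ Metric.ball (0:ℂ) 1 := by simp
  have hgderiv : ∀ i, HasDerivAt (gg i) 0 0 := by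
    intro i
    have hh0 : DifferentiableAt ℂ (hh i) 0 :=
      ((hh_differentiableOn i) 0 hball0).differentiableAt
        (Metric.isOpen_ball.mem_nhds hball0)
    have h2 : HasDerivAt (fun z : ℂ => z^2) 0 0 := by
      simpa using hasDerivAt_pow 2 (0:ℂ)
    have := h2.mul hh0.hasDerivAt
    simp at this
    exact this
  have hfderiv : HasDerivAt f v 0 := by
    have h1 : HasDerivAt (fun z : ℂ => p + z • v) v 0 := by
      have := ((hasDerivAt_id (0:ℂ)).smul_const v).const_add p
      simpa using this
    have h2 := (hgderiv 0).smul_const E0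
    have h3 := (hgderiv 1).smul_const E1
    have := (h1.add h2).add h3
    simp at this
    exact this
  -- coordinate estimate
  have hcoord : ∀ i m z, m % 2 = i → i < 2 → ‖z‖ < 1 →
      ‖gg i z‖ ≤ ‖f z‖ + ‖p‖ + ‖v‖ := by
    intro i m z him hi2 hz
    have h10 : E0 i0 = 1 := by simp [hE0, EuclideanSpace.single_apply]
    have h01 : E0 i1 = 0 := by simp [hE0, EuclideanSpace.single_apply, hi01]
    have h11 : E1 i1 = 1 := by simp [hE1, EuclideanSpace.single_apply]
    have h1i0 : E1 i0 = 0 := by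
      simp [hE1, EuclideanSpace.single_apply, Ne.symm hi01]
    have key : ∀ (j : Fin n), (f z) j = p j + z * v j + gg 0 z * E0 j + gg 1 z * E1 j := by
      intro j
      simp only [hf, PiLp.add_apply, PiLp.smul_apply, smul_eq_mul]
    have est : ∀ (j : Fin n), ‖(f z) j - p j - z * v j‖ ≤ ‖f z‖ + ‖p‖ + ‖v‖ := by
      intro j
      have e1 : ‖(f z) j‖ ≤ ‖f z‖ := coord_le_norm _ _
      have e2 : ‖p j‖ ≤ ‖p‖ := coord_le_norm _ _
      have e3 : ‖z * v j‖ ≤ ‖v‖ := by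
        rw [norm_mul]
        calc ‖z‖ * ‖v j‖ ≤ 1 * ‖v j‖ :=
              mul_le_mul_of_nonneg_right hz.le (norm_nonneg _)
        _ = ‖v j‖ := one_mul _
        _ ≤ ‖v‖ := coord_le_norm _ _
      calc ‖(f z) j - p j - z * v j‖ ≤ ‖(f z) j - p j‖ + ‖z * v j‖ := norm_sub_le _ _
      _ ≤ (‖(f z) j‖ + ‖p j‖) + ‖z * v j‖ := by
          have := norm_sub_le ((f z) j) (p j); linarith
      _ ≤ ‖f z‖ + ‖p‖ + ‖v‖ := by linarith
    interval_cases i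
    · have happ : gg 0 z = (f z) i0 - p i0 - z * v i0 := by
        rw [key i0, h10, h1i0]; ring
      rw [happ]; exact est i0
    · have happ : gg 1 z = (f z) i1 - p i1 - z * v i1 := by
        rw [key i1, h01, h11]; ring
      rw [happ]; exact est i1
  -- properness
  have hproper : ProperOnDisc f := by
    intro K hK
    obtain ⟨R, hRK⟩ := (Metric.isBounded_iff_subset_closedBall 0).mp hK.isBounded
    obtain ⟨m₀, hm₀⟩ := exists_nat_gt (R + ‖p‖ + ‖v‖)
    set r : ℝ := rr (m₀ + 1) with hr
    have hr1 : r < 1 := rr_lt_one _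
    have hr0 : 0 ≤ r := (rr_pos _).le
    have hsub : {ζ : ℂ | ζ ∈ Metric.ball (0:ℂ) 1 ∧ f ζ ∈ K} ⊆ Metric.closedBall 0 r := by
      rintro z ⟨hz, hfz⟩
      simp only [Metric.mem_ball, dist_zero_right] at hz
      simp only [Metric.mem_closedBall, dist_zero_right]
      by_contra hcon
      push_neg at hcon
      -- find the annulus containing z
      have hex : ∃ k, ‖z‖ < rr (k+1) := by
        obtain ⟨m₁, hm₁⟩ := rr_tendsto (show (‖z‖+1)/2 < 1 by linarith)
        exact ⟨m₁, lt_of_lt_of_le (by linarith) (hm₁ (m₁+1) (by omega))⟩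
      set m' := Nat.find hex with hm'
      have hspec : ‖z‖ < rr (m' + 1) := Nat.find_spec hex
      have hm'big : m₀ < m' := by
        by_contra hcon2
        push_neg at hcon2
        have : rr (m' + 1) ≤ rr (m₀ + 1) := by
          rcases eq_or_lt_of_le hcon2 with h | h
          · rw [h]
          · exact (rr_mono (by omega)).le
        have : rr (m'+1) < ‖z‖ := lt_of_le_of_lt this hcon
        linarith
      set m := m' - 1 with hm
      have hmm' : m + 1 = m' := by omega
      have hlow : rr (m + 1) ≤ ‖z‖ := by
        have := Nat.find_min hex (show m < m' by omega)
        push_neg at this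
        exact this
      have hhigh : ‖z‖ ≤ rr (m + 2) := by
        have : m + 2 = m' + 1 := by omega
        rw [this]; exact hspec.le
      have hbig := gg_big m z hlow hhigh
      have hcoordm := hcoord (m % 2) m z rfl (Nat.mod_lt _ (by norm_num)) hz
      have hfK : ‖f z‖ ≤ R := by
        have := hRK hfz
        simpa [Metric.mem_closedBall, dist_zero_right] using this
      have hmge : (m₀ : ℝ) ≤ (m : ℝ) := by exact_mod_cast Nat.le_of_lt_succ (by omega)
      linarith
    -- compactness
    have hseteq : {ζ : ℂ | ζ ∈ Metric.ball (0:ℂ) 1 ∧ f ζ ∈ K}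
        = Metric.closedBall (0:ℂ) r ∩ f ⁻¹' K := by
      apply Set.eq_of_subset_of_subset
      · intro z hz
        exact ⟨hsub hz, hz.2⟩
      · rintro z ⟨hz1, hz2⟩
        refine ⟨?_, hz2⟩
        simp only [Metric.mem_closedBall, dist_zero_right] at hz1
        simp only [Metric.mem_ball, dist_zero_right]
        linarith
    rw [hseteq]
    have hcb : Metric.closedBall (0:ℂ) r ⊆ Metric.ball (0:ℂ) 1 := by
      intro z hz
      simp only [Metric.mem_closedBall, dist_zero_right] at hz
      simp only [Metric.mem_ball, dist_zero_right]
      linarith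
    have hcont : ContinuousOn f (Metric.closedBall (0:ℂ) r) :=
      (hfdiff.continuousOn).mono hcb
    have hclosed : IsClosed (Metric.closedBall (0:ℂ) r ∩ f ⁻¹' K) :=
      hcont.preimage_isClosed_of_isClosed Metric.isClosed_closedBall hK.isClosed
    exact (isCompact_closedBall _ _).of_isClosed_subset hclosed Set.inter_subset_left
  refine ⟨1, f, one_pos, hfdiff, hproper, hf0, ?_⟩
  rw [hfderiv.deriv, one_smul]
end

section
/- Let n ≥ 2 and let S ⊆ ℂⁿ be a closed discrete subset. Let f : 𝔻 → ℂⁿ be a holomorphic map and let V be an open subset of 𝔻 whose closure is a compact subset of 𝔻, such that f(ζ) ∉ S for every ζ ∈ 𝔻 \ V. Then for every ε > 0 there exist a real number λ > 0 and a proper holomorphic map g : 𝔻 → ℂⁿ satisfying: (i) g(ζ) ∉ S for every ζ ∈ 𝔻 \ V; (ii) ‖g(ζ) − f(ζ)‖ < ε for every ζ ∈ V; (iii) g(0) = f(0) and g'(0) = λ·f'(0). -/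
noncomputable section
namespace PDA
open Filter Metric Set

/-- radii -/
def u (i : ℕ) : ℝ := i / (i + 1)

lemma u_nonneg (i : ℕ) : 0 ≤ u i := by
  rw [u]; positivity

lemma u_lt_one (i : ℕ) : u i < 1 := by
  rw [u, div_lt_one (by positivity)]; linarith

lemma u_zero : u 0 = 0 := by simp [u]

lemma u_pos {i : ℕ} (hi : 1 ≤ i) : 0 < u i := by
  rw [u]
  have : (0:ℝ) < i := by exact_mod_cast hi
  positivity

lemma u_mono : StrictMono u := by
  intro i j hij
  rw [u, u, div_lt_div_iff₀ (by positivity) (by positivity)]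
  have h : (i:ℝ) < j := by exact_mod_cast hij
  nlinarith

lemma u_monotone : Monotone u := u_mono.monotone

lemma u_tendsto : Tendsto u atTop (nhds 1) := by
  have : u = fun i : ℕ => 1 - 1 / ((i:ℝ) + 1) := by
    funext i; rw [u]; field_simp; ring
  rw [this]
  have h : Tendsto (fun i : ℕ => 1 / ((i : ℝ) + 1)) atTop (nhds 0) :=
    tendsto_one_div_add_atTop_nhds_zero_nat
  simpa using tendsto_const_nhds.sub h

lemma exists_ge_u {x : ℝ} (hx : x < 1) : ∃ m : ℕ, 1 ≤ m ∧ x < u m := by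
  have h := (u_tendsto.eventually_const_lt hx).and (eventually_ge_atTop 1)
  obtain ⟨m, hm1, hm2⟩ := h.exists
  exact ⟨m, hm2, hm1⟩

section rec

open scoped Classical in
/-- choice of exponent -/
def NOf (k : ℕ) (K : ℝ) : ℕ :=
  if h : ∃ m : ℕ, 2 ≤ m ∧ K * (u (k-1) / u k) ^ m ≤ (1/2) ^ k then h.choose else 2

lemma NOf_exists {k : ℕ} (hk : 1 ≤ k) (K : ℝ) :
    ∃ m : ℕ, 2 ≤ m ∧ K * (u (k-1) / u k) ^ m ≤ (1/2) ^ k := by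
  set q : ℝ := u (k-1) / u k with hq
  have hq0 : 0 ≤ q := div_nonneg (u_nonneg _) (u_nonneg _)
  have hq1 : q < 1 := by
    rw [hq, div_lt_one (u_pos hk)]
    exact u_mono (Nat.sub_lt hk one_pos)
  have htend : Tendsto (fun m : ℕ => K * q ^ m) atTop (nhds 0) := by
    simpa using (tendsto_pow_atTop_nhds_zero_of_lt_one hq0 hq1).const_mul K
  have hev := htend.eventually_le_const (show (0:ℝ) < (1/2)^k by positivity)
  obtain ⟨m, hm1, hm2⟩ := (hev.and (eventually_ge_atTop 2)).exists
  exact ⟨m, hm2, hm1⟩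

open scoped Classical in
lemma NOf_ge_two (k : ℕ) (K : ℝ) : 2 ≤ NOf k K := by
  rw [NOf]; split
  · rename_i h
    exact (Exists.choose_spec h).1
  · exact le_refl _

open scoped Classical in
lemma NOf_spec {k : ℕ} (hk : 1 ≤ k) (K : ℝ) :
    K * (u (k-1) / u k) ^ (NOf k K) ≤ (1/2) ^ k := by
  rw [NOf]
  rw [dif_pos (NOf_exists hk K)]
  exact (Exists.choose_spec (NOf_exists hk K)).2

/-- (running sum of previous coefficients, current coefficient) -/
def stc : ℕ → ℝ × ℝ
  | 0 => (0, 0)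
  | (k+1) =>
    let s := (stc k).1 + (stc k).2
    (s, (((k+1:ℕ):ℝ) + 3 + s) / (u (k+1)) ^ (NOf (k+1) (((k+1:ℕ):ℝ) + 3 + s)))

/-- sum of c_j for j < k -/
def st (k : ℕ) : ℝ := (stc k).1
/-- coefficients -/
def c (k : ℕ) : ℝ := (stc k).2
/-- exponents -/
def N (k : ℕ) : ℕ := NOf k ((k:ℝ) + 3 + st k)

lemma st_zero : st 0 = 0 := rfl
lemma c_zero : c 0 = 0 := rfl

lemma st_succ (k : ℕ) : st (k+1) = st k + c k := rfl

lemma c_eq {k : ℕ} (hk : 1 ≤ k) : c k = ((k:ℝ) + 3 + st k) / (u k) ^ (N k) := by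
  cases k with
  | zero => omega
  | succ j => rfl

lemma N_ge_two (k : ℕ) : 2 ≤ N k := NOf_ge_two _ _

lemma st_c_nonneg : ∀ k, 0 ≤ st k ∧ 0 ≤ c k := by
  intro k
  induction k with
  | zero => exact ⟨le_refl 0, le_refl 0⟩
  | succ k ih =>
    have h1 : 0 ≤ st (k+1) := by rw [st_succ]; linarith [ih.1, ih.2]
    refine ⟨h1, ?_⟩
    rw [c_eq (Nat.succ_le_succ (Nat.zero_le k))]
    have hu : (0:ℝ) < u (k+1) := u_pos (Nat.succ_le_succ (Nat.zero_le k))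
    have hK : (0:ℝ) ≤ ((k+1:ℕ):ℝ) + 3 + st (k+1) := by positivity
    positivity

lemma st_nonneg (k : ℕ) : 0 ≤ st k := (st_c_nonneg k).1
lemma c_nonneg (k : ℕ) : 0 ≤ c k := (st_c_nonneg k).2

lemma c_pos {k : ℕ} (hk : 1 ≤ k) : 0 < c k := by
  rw [c_eq hk]
  have h1 : (0:ℝ) < u k := u_pos hk
  have h2 : 0 ≤ st k := st_nonneg k
  have h3 : (0:ℝ) < (k:ℝ) + 3 + st k := by positivity
  positivity

/-- main size identity -/
lemma key1 {k : ℕ} (hk : 1 ≤ k) : c k * (u k) ^ (N k) = (k:ℝ) + 3 + st k := by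
  rw [c_eq hk, div_mul_cancel₀]
  exact pow_ne_zero _ (ne_of_gt (u_pos hk))

/-- smallness on previous radii -/
lemma key2 {k : ℕ} (hk : 1 ≤ k) : c k * (u (k-1)) ^ (N k) ≤ (1/2) ^ k := by
  have h := NOf_spec hk ((k:ℝ) + 3 + st k)
  rw [← N] at h
  calc c k * (u (k-1)) ^ (N k)
      = ((k:ℝ) + 3 + st k) * (u (k-1) / u k) ^ (N k) := by
        rw [c_eq hk, div_pow]
        have : (u k) ^ (N k) ≠ 0 := pow_ne_zero _ (ne_of_gt (u_pos hk))
        field_simp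
    _ ≤ (1/2) ^ k := h

lemma st_eq_sum (k : ℕ) : st k = ∑ j ∈ Finset.range k, c j := by
  induction k with
  | zero => simp [st_zero]
  | succ k ih => rw [st_succ, Finset.sum_range_succ, ih]

end rec

section series
open Finset

variable (q : ℕ → Prop) [DecidablePred q]

/-- the scalar series -/
def Ser (z : ℂ) : ℂ := ∑' k, if q k then (c k : ℂ) * z ^ N k else 0

/-- the scalar series divided by z^2 -/
def SerAux (z : ℂ) : ℂ := ∑' k, if q k then (c k : ℂ) * z ^ (N k - 2) else 0

lemma norm_term_le (k : ℕ) (z : ℂ) :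
    ‖if q k then (c k : ℂ) * z ^ N k else 0‖ ≤ c k * ‖z‖ ^ N k := by
  split
  · rw [norm_mul, norm_pow, Complex.norm_real, Real.norm_eq_abs,
      abs_of_nonneg (c_nonneg k)]
  · simp only [norm_zero]
    have := c_nonneg k
    positivity

lemma norm_termAux_le (k : ℕ) (z : ℂ) :
    ‖if q k then (c k : ℂ) * z ^ (N k - 2) else 0‖ ≤ c k * ‖z‖ ^ (N k - 2) := by
  split
  · rw [norm_mul, norm_pow, Complex.norm_real, Real.norm_eq_abs,
      abs_of_nonneg (c_nonneg k)]
  · simp only [norm_zero]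
    have := c_nonneg k
    positivity

/-- dominating bound -/
def bnd (m k : ℕ) : ℝ := if k ≤ m then c k else (1/2) ^ k

lemma bnd_summable (m : ℕ) : Summable (bnd m) := by
  have h1 : Summable (fun k : ℕ => (if k ≤ m then c k else 0) + (1/2) ^ k) := by
    apply Summable.add
    · apply summable_of_ne_finset_zero (s := Finset.range (m+1))
      intro k hk
      rw [if_neg]
      simp only [Finset.mem_range, not_lt] at hk
      omega
    · exact summable_geometric_of_lt_one (by norm_num) (by norm_num)
  apply Summable.of_nonneg_of_le _ _ h1
  · intro k; rw [bnd]; split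
    · exact c_nonneg k
    · positivity
  · intro k
    by_cases h : k ≤ m
    · rw [bnd, if_pos h, if_pos h]
      have : (0:ℝ) ≤ (1/2)^k := by positivity
      linarith
    · rw [bnd, if_neg h, if_neg h]
      simp

lemma pow_norm_le_one {z : ℂ} (h : ‖z‖ ≤ 1) (j : ℕ) : ‖z‖ ^ j ≤ 1 :=
  pow_le_one₀ (norm_nonneg z) h

lemma cz_le_bnd {m k : ℕ} (hm : 1 ≤ m) {z : ℂ} (hz : ‖z‖ ≤ u m) :
    c k * ‖z‖ ^ N k ≤ bnd m k := by
  have hz1 : ‖z‖ ≤ 1 := hz.trans (u_lt_one m).le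
  rw [bnd]; split
  · calc c k * ‖z‖ ^ N k ≤ c k * 1 :=
        mul_le_mul_of_nonneg_left (pow_norm_le_one hz1 _) (c_nonneg k)
    _ = c k := mul_one _
  · rename_i hkm
    have hk1 : 1 ≤ k := by omega
    have hmk : u m ≤ u (k-1) := u_monotone (by omega)
    calc c k * ‖z‖ ^ N k ≤ c k * (u (k-1)) ^ N k := by
          apply mul_le_mul_of_nonneg_left _ (c_nonneg k)
          exact pow_le_pow_left₀ (norm_nonneg z) (hz.trans hmk) _
      _ ≤ (1/2) ^ k := key2 hk1

/-- dominating bound for aux series -/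
def bndA (m k : ℕ) : ℝ := if k ≤ m then c k else (1/2) ^ k / (u m) ^ 2

lemma bndA_summable {m : ℕ} (hm : 1 ≤ m) : Summable (bndA m) := by
  have hum := u_pos hm
  have h1 : Summable (fun k : ℕ => (if k ≤ m then c k else 0) + (1/2) ^ k / (u m) ^ 2) := by
    apply Summable.add
    · apply summable_of_ne_finset_zero (s := Finset.range (m+1))
      intro k hk
      rw [if_neg]
      simp only [Finset.mem_range, not_lt] at hk
      omega
    · exact (summable_geometric_of_lt_one (by norm_num) (by norm_num)).div_const _
  apply Summable.of_nonneg_of_le _ _ h1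
  · intro k; rw [bndA]; split
    · exact c_nonneg k
    · positivity
  · intro k
    by_cases h : k ≤ m
    · rw [bndA, if_pos h, if_pos h]
      have : (0:ℝ) ≤ (1/2)^k / (u m)^2 := by positivity
      linarith
    · rw [bndA, if_neg h, if_neg h]
      simp

lemma czA_le_bndA {m k : ℕ} (hm : 1 ≤ m) {z : ℂ} (hz : ‖z‖ ≤ u m) :
    c k * ‖z‖ ^ (N k - 2) ≤ bndA m k := by
  have hum := u_pos hm
  have hz1 : ‖z‖ ≤ 1 := hz.trans (u_lt_one m).le
  rw [bndA]; split
  · calc c k * ‖z‖ ^ (N k - 2) ≤ c k * 1 :=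
        mul_le_mul_of_nonneg_left (pow_norm_le_one hz1 _) (c_nonneg k)
    _ = c k := mul_one _
  · rename_i hkm
    have hk1 : 1 ≤ k := by omega
    have hmk : u m ≤ u (k-1) := u_monotone (by omega)
    have hN := N_ge_two k
    have e1 : (u m) ^ (N k - 2) = (u m) ^ (N k) / (u m) ^ 2 := by
      rw [eq_div_iff (by positivity), ← pow_add]
      congr 1
      omega
    calc c k * ‖z‖ ^ (N k - 2) ≤ c k * (u m) ^ (N k - 2) := by
          apply mul_le_mul_of_nonneg_left _ (c_nonneg k)
          exact pow_le_pow_left₀ (norm_nonneg z) hz _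
      _ = c k * (u m) ^ (N k) / (u m) ^ 2 := by rw [e1]; ring
      _ ≤ c k * (u (k-1)) ^ (N k) / (u m) ^ 2 := by
          apply div_le_div_of_nonneg_right _ (by positivity)
          exact mul_le_mul_of_nonneg_left
            (pow_le_pow_left₀ (u_nonneg m) hmk _) (c_nonneg k)
      _ ≤ (1/2) ^ k / (u m) ^ 2 := by
          apply div_le_div_of_nonneg_right (key2 hk1) (by positivity)

lemma summable_norm_term {m : ℕ} (hm : 1 ≤ m) {z : ℂ} (hz : ‖z‖ ≤ u m) :
    Summable (fun k => ‖if q k then (c k : ℂ) * z ^ N k else 0‖) := by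
  apply Summable.of_nonneg_of_le (fun k => norm_nonneg _)
    (fun k => (norm_term_le q k z).trans (cz_le_bnd hm hz))
    (bnd_summable m)

lemma summable_term {m : ℕ} (hm : 1 ≤ m) {z : ℂ} (hz : ‖z‖ ≤ u m) :
    Summable (fun k => if q k then (c k : ℂ) * z ^ N k else 0) :=
  (summable_norm_term q hm hz).of_norm

lemma ser_eq (z : ℂ) : Ser q z = z ^ 2 * SerAux q z := by
  rw [Ser, SerAux, ← tsum_mul_left]
  congr 1; funext k
  by_cases hq : q k
  · rw [if_pos hq, if_pos hq]
    have hzz : z ^ (N k) = z ^ 2 * z ^ (N k - 2) := by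
      rw [← pow_add]
      congr 1
      have := N_ge_two k
      omega
    rw [hzz]; ring
  · rw [if_neg hq, if_neg hq, mul_zero]

lemma serAux_diffOn : DifferentiableOn ℂ (SerAux q) (ball (0:ℂ) 1) := by
  intro z hz
  rw [mem_ball, dist_zero_right] at hz
  obtain ⟨m, hm1, hmz⟩ := exists_ge_u hz
  have key : DifferentiableOn ℂ (SerAux q) (ball (0:ℂ) (u m)) := by
    have huc : TendstoUniformlyOn
        (fun (s : Finset ℕ) x => ∑ k ∈ s, if q k then (c k : ℂ) * x ^ (N k - 2) else 0)
        (SerAux q) atTop (closedBall (0:ℂ) (u m)) := by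
      apply tendstoUniformlyOn_tsum (bndA_summable hm1)
      intro k x hx
      rw [mem_closedBall, dist_zero_right] at hx
      exact (norm_termAux_le q k x).trans (czA_le_bndA hm1 hx)
    apply TendstoLocallyUniformlyOn.differentiableOn
      (huc.tendstoLocallyUniformlyOn.mono ball_subset_closedBall)
    · filter_upwards with s
      apply DifferentiableOn.fun_sum
      intro k _
      by_cases hq : q k
      · simp only [if_pos hq]
        exact ((differentiable_const _).mul (differentiable_pow _)).differentiableOn
      · simp only [if_neg hq]
        exact differentiableOn_const 0
    · exact isOpen_ball
  have hzm : z ∈ ball (0:ℂ) (u m) := by rw [mem_ball, dist_zero_right]; exact hmz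
  exact ((key.differentiableAt (isOpen_ball.mem_nhds hzm))).differentiableWithinAt

lemma ser_fun_eq : Ser q = fun z : ℂ => z ^ 2 * SerAux q z := funext (ser_eq q)

lemma ser_diffOn : DifferentiableOn ℂ (Ser q) (ball (0:ℂ) 1) := by
  rw [ser_fun_eq]
  exact (differentiable_pow 2).differentiableOn.mul (serAux_diffOn q)

lemma ser_zero : Ser q 0 = 0 := by
  rw [ser_eq]; ring

lemma zero_mem_ball : (0:ℂ) ∈ ball (0:ℂ) 1 := by
  rw [mem_ball, dist_zero_right, norm_zero]; norm_num

lemma ser_hasDerivAt_zero : HasDerivAt (Ser q) 0 0 := by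
  have hA : DifferentiableAt ℂ (SerAux q) 0 :=
    (serAux_diffOn q).differentiableAt (isOpen_ball.mem_nhds zero_mem_ball)
  have h1 := (hasDerivAt_pow 2 (0:ℂ)).fun_mul hA.hasDerivAt
  rw [ser_fun_eq]
  simpa using h1

/-- the key lower bound on the `i`-th annulus -/
lemma ser_lower (hgap : ∀ j k, q j → q k → j < k → j + 2 ≤ k) {i : ℕ} (hi : 1 ≤ i) (hqi : q i)
    {z : ℂ} (h1 : u i ≤ ‖z‖) (h2 : ‖z‖ ≤ u (i+1)) : (i:ℝ) ≤ ‖Ser q z‖ := by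
  classical
  set f : ℕ → ℂ := fun k => if q k then (c k:ℂ) * z ^ N k else 0 with hfdef
  have hz1 : ‖z‖ ≤ 1 := h2.trans (u_lt_one _).le
  have hsum : Summable f := summable_term q (Nat.le_add_left 1 i) h2
  have hsplit : Ser q z = f i + ∑' k, ite (k = i) 0 (f k) := hsum.tsum_eq_add_tsum_ite i
  have hfi : ((i:ℝ) + 3 + st i) ≤ ‖f i‖ := by
    rw [hfdef]; simp only [if_pos hqi]
    rw [norm_mul, norm_pow, Complex.norm_real, Real.norm_eq_abs, abs_of_nonneg (c_nonneg i)]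
    calc (i:ℝ)+3+st i = c i * u i ^ N i := (key1 hi).symm
      _ ≤ c i * ‖z‖ ^ N i :=
        mul_le_mul_of_nonneg_left (pow_le_pow_left₀ (u_nonneg i) h1 _) (c_nonneg i)
  -- bound for the remaining terms
  set G : ℕ → ℝ := fun k => (if k < i then c k else 0) + (1/2)^k with hGdef
  have hGsum : Summable G := by
    apply Summable.add
    · apply summable_of_ne_finset_zero (s := Finset.range i)
      intro k hk
      simp only [Finset.mem_range, not_lt] at hk
      rw [if_neg (by omega)]
    · exact summable_geometric_of_lt_one (by norm_num) (by norm_num)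
  have hptwise : ∀ k, ‖ite (k = i) 0 (f k)‖ ≤ G k := by
    intro k
    have hG0 : (0:ℝ) ≤ G k := by
      have := c_nonneg k
      by_cases h : k < i
      · simp only [hGdef, if_pos h]; positivity
      · simp only [hGdef, if_neg h]; positivity
    by_cases hki : k = i
    · subst hki
      simpa using hG0
    · rw [if_neg hki]
      have hbase : ‖f k‖ ≤ c k * ‖z‖ ^ N k := norm_term_le q k z
      by_cases hq : q k
      · rcases lt_or_gt_of_ne hki with hlt | hgt
        · -- k < i
          rw [hGdef]
          have : ‖f k‖ ≤ c k := by
            calc ‖f k‖ ≤ c k * ‖z‖ ^ N k := hbase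
              _ ≤ c k * 1 := mul_le_mul_of_nonneg_left
                  (pow_norm_le_one hz1 _) (c_nonneg k)
              _ = c k := mul_one _
          simp only [if_pos hlt]
          have : (0:ℝ) ≤ (1/2)^k := by positivity
          linarith [‹‖f k‖ ≤ c k›]
        · -- k > i, so k ≥ i + 2
          have hk2 : i + 2 ≤ k := hgap i k hqi hq hgt
          have hk1 : 1 ≤ k := by omega
          have hle : u (i+1) ≤ u (k-1) := u_monotone (by omega)
          have : ‖f k‖ ≤ (1/2)^k := by
            calc ‖f k‖ ≤ c k * ‖z‖ ^ N k := hbase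
              _ ≤ c k * (u (k-1)) ^ N k := mul_le_mul_of_nonneg_left
                  (pow_le_pow_left₀ (norm_nonneg z) (h2.trans hle) _) (c_nonneg k)
              _ ≤ (1/2)^k := key2 hk1
          by_cases h : k < i
          · simp only [hGdef, if_pos h]
            have := c_nonneg k
            linarith
          · simp only [hGdef, if_neg h]
            linarith
      · rw [hfdef]
        simp only [if_neg hq, norm_zero]
        exact hG0
  have hsumnorm : Summable (fun k => ‖ite (k = i) 0 (f k)‖) :=
    Summable.of_nonneg_of_le (fun k => norm_nonneg _) hptwise hGsum
  have hG1 : ∑' k, ((if k < i then c k else (0:ℝ))) = st i := by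
    rw [tsum_eq_sum (s := Finset.range i)]
    · rw [st_eq_sum]
      apply Finset.sum_congr rfl
      intro k hk
      rw [if_pos (Finset.mem_range.mp hk)]
    · intro k hk
      simp only [Finset.mem_range, not_lt] at hk
      rw [if_neg (by omega)]
  have hG2 : ∑' k : ℕ, ((1:ℝ)/2)^k = 2 := by
    rw [tsum_geometric_of_lt_one (by norm_num) (by norm_num)]
    norm_num
  have hGtsum : ∑' k, G k = st i + 2 := by
    rw [hGdef, Summable.tsum_add _ (summable_geometric_of_lt_one (by norm_num) (by norm_num)), hG1, hG2]
    apply summable_of_ne_finset_zero (s := Finset.range i)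
    intro k hk
    simp only [Finset.mem_range, not_lt] at hk
    rw [if_neg (by omega)]
  have hrest : ‖∑' k, ite (k = i) 0 (f k)‖ ≤ st i + 2 := by
    calc ‖∑' k, ite (k = i) 0 (f k)‖ ≤ ∑' k, ‖ite (k = i) 0 (f k)‖ :=
        norm_tsum_le_tsum_norm hsumnorm
      _ ≤ ∑' k, G k := hsumnorm.tsum_le_tsum hptwise hGsum
      _ = st i + 2 := hGtsum
  have hmain : ‖f i‖ - (st i + 2) ≤ ‖Ser q z‖ := by
    have h := norm_sub_norm_le (f i) (-(∑' k, ite (k = i) 0 (f k)))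
    rw [norm_neg, sub_neg_eq_add, ← hsplit] at h
    linarith
  linarith

end series

section pair

/-- first component -/
def phi : ℂ → ℂ := Ser (fun k => Even k)
/-- second component -/
def psi : ℂ → ℂ := Ser (fun k => ¬ Even k)

lemma gap_even : ∀ j k : ℕ, Even j → Even k → j < k → j + 2 ≤ k := by
  intro j k hj hk hlt
  rw [Nat.even_iff] at hj hk
  omega

lemma gap_odd : ∀ j k : ℕ, ¬ Even j → ¬ Even k → j < k → j + 2 ≤ k := by
  intro j k hj hk hlt
  rw [Nat.even_iff] at hj hk
  omega

lemma phi_diffOn : DifferentiableOn ℂ phi (ball (0:ℂ) 1) := ser_diffOn _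
lemma psi_diffOn : DifferentiableOn ℂ psi (ball (0:ℂ) 1) := ser_diffOn _
lemma phi_zero : phi 0 = 0 := ser_zero _
lemma psi_zero : psi 0 = 0 := ser_zero _
lemma phi_deriv : HasDerivAt phi 0 0 := ser_hasDerivAt_zero _
lemma psi_deriv : HasDerivAt psi 0 0 := ser_hasDerivAt_zero _

lemma exists_annulus {z : ℂ} (h1 : ‖z‖ < 1) {m : ℕ} (hm : 1 ≤ m) (h2 : u m ≤ ‖z‖) :
    ∃ i, m ≤ i ∧ u i ≤ ‖z‖ ∧ ‖z‖ ≤ u (i+1) := by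
  classical
  have hP : ∃ j, ‖z‖ < u j := by
    obtain ⟨j, _, hj⟩ := exists_ge_u h1
    exact ⟨j, hj⟩
  let j0 := Nat.find hP
  have hj0 : ‖z‖ < u j0 := Nat.find_spec hP
  have hj0m : m < j0 := by
    by_contra hc
    push_neg at hc
    exact absurd ((u_monotone hc).trans h2) (not_le.mpr hj0)
  have hprev : ¬ ‖z‖ < u (j0 - 1) := Nat.find_min hP (by omega)
  refine ⟨j0 - 1, by omega, not_lt.mp hprev, ?_⟩
  have : j0 - 1 + 1 = j0 := by omega
  rw [this]
  exact hj0.le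

lemma pair_large {z : ℂ} (h1 : ‖z‖ < 1) {m : ℕ} (hm : 1 ≤ m) (h2 : u m ≤ ‖z‖) :
    (m:ℝ) ≤ max ‖phi z‖ ‖psi z‖ := by
  obtain ⟨i, hmi, hi1, hi2⟩ := exists_annulus h1 hm h2
  have him : 1 ≤ i := hm.trans hmi
  have hcast : (m:ℝ) ≤ (i:ℝ) := by exact_mod_cast hmi
  by_cases he : Even i
  · have := ser_lower (fun k => Even k) gap_even him he hi1 hi2
    calc (m:ℝ) ≤ (i:ℝ) := hcast
      _ ≤ ‖phi z‖ := this
      _ ≤ _ := le_max_left _ _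
  · have := ser_lower (fun k => ¬ Even k) gap_odd him he hi1 hi2
    calc (m:ℝ) ≤ (i:ℝ) := hcast
      _ ≤ ‖psi z‖ := this
      _ ≤ _ := le_max_right _ _

lemma phi_big {i : ℕ} (hi : 1 ≤ i) (he : Even i) :
    (i:ℝ) ≤ ‖phi ((u i : ℝ) : ℂ)‖ := by
  have hnorm : ‖((u i : ℝ) : ℂ)‖ = u i := by
    rw [Complex.norm_real, Real.norm_eq_abs, abs_of_nonneg (u_nonneg i)]
  apply ser_lower (fun k => Even k) gap_even hi he
  · rw [hnorm]
  · rw [hnorm]; exact (u_monotone (Nat.le_succ i))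

end pair

section helpers

lemma coord_le {n : ℕ} (x : EuclideanSpace ℂ (Fin n)) (i : Fin n) : ‖x i‖ ≤ ‖x‖ := by
  rw [EuclideanSpace.norm_eq]
  have h : ‖x i‖ ^ 2 ≤ ∑ j, ‖x j‖ ^ 2 :=
    Finset.single_le_sum (f := fun j => ‖x j‖ ^ 2) (fun j _ => sq_nonneg _) (Finset.mem_univ i)
  calc ‖x i‖ = Real.sqrt (‖x i‖ ^ 2) := (Real.sqrt_sq (norm_nonneg _)).symm
    _ ≤ _ := Real.sqrt_le_sqrt h

lemma fiber_countable {F : ℂ → ℂ} (hF : DifferentiableOn ℂ F (ball (0:ℂ) 1))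
    (hub : ∀ C : ℝ, ∃ z ∈ ball (0:ℂ) 1, C < ‖F z‖) (a : ℂ) :
    {z | z ∈ ball (0:ℂ) 1 ∧ F z = a}.Countable := by
  by_contra hcb
  set A := {z | z ∈ ball (0:ℂ) 1 ∧ F z = a} with hA
  have hcover : A = ⋃ m : ℕ, A ∩ closedBall 0 (u m) := by
    ext z
    constructor
    · intro hz
      have hz1 : ‖z‖ < 1 := by
        have := hz.1
        rwa [mem_ball, dist_zero_right] at this
      obtain ⟨m, _, hm⟩ := exists_ge_u hz1
      refine mem_iUnion.mpr ⟨m, hz, ?_⟩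
      rw [mem_closedBall, dist_zero_right]
      exact hm.le
    · intro hz
      obtain ⟨m, hm, -⟩ := mem_iUnion.mp hz
      exact hm
  have hex : ∃ m, ¬ (A ∩ closedBall 0 (u m)).Countable := by
    by_contra hall
    push_neg at hall
    exact hcb (hcover ▸ Set.countable_iUnion hall)
  obtain ⟨m, hm⟩ := hex
  have hinf : (A ∩ closedBall 0 (u m)).Infinite := by
    intro hfin
    exact hm hfin.countable
  let e := Set.Infinite.natEmbedding _ hinf
  have hxs : ∀ j : ℕ, (e j : ℂ) ∈ closedBall (0:ℂ) (u m) := fun j => (e j).2.2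
  obtain ⟨x0, hx0mem, σ, hσmono, hσtend⟩ :=
    (isCompact_closedBall (0:ℂ) (u m)).tendsto_subseq hxs
  have hx0ball : x0 ∈ ball (0:ℂ) 1 := by
    rw [mem_ball, dist_zero_right]
    rw [mem_closedBall, dist_zero_right] at hx0mem
    exact lt_of_le_of_lt hx0mem (u_lt_one m)
  have hne : ∀ᶠ j in Filter.atTop, (e (σ j) : ℂ) ≠ x0 := by
    by_cases hexj : ∃ j0, (e (σ j0) : ℂ) = x0
    · obtain ⟨j0, hj0⟩ := hexj
      filter_upwards [Filter.eventually_gt_atTop j0] with j hj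
      intro hjx
      have : e (σ j) = e (σ j0) := Subtype.coe_injective (hjx.trans hj0.symm)
      have : σ j = σ j0 := e.injective this
      exact absurd (hσmono.injective this) (by omega)
    · push_neg at hexj
      exact Filter.Eventually.of_forall hexj
  have htendW : Filter.Tendsto (fun j => (e (σ j) : ℂ)) Filter.atTop (nhdsWithin x0 {x0}ᶜ) := by
    apply tendsto_nhdsWithin_of_tendsto_nhds_of_eventually_within _ hσtend
    exact hne.mono fun j h => h
  have hfreq : ∃ᶠ w in nhdsWithin x0 {x0}ᶜ, F w = a :=
    htendW.frequently (Filter.Eventually.frequently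
      (Filter.Eventually.of_forall fun j => (e (σ j)).2.1.2))
  have hana : AnalyticOnNhd ℂ F (ball (0:ℂ) 1) := hF.analyticOnNhd isOpen_ball
  have heq : Set.EqOn F (fun _ => a) (ball (0:ℂ) 1) :=
    hana.eqOn_of_preconnected_of_frequently_eq analyticOnNhd_const
      (convex_ball (0:ℂ) 1).isPreconnected hx0ball hfreq
  obtain ⟨z, hz, hzgt⟩ := hub ‖a‖
  rw [heq hz] at hzgt
  exact lt_irrefl _ hzgt

lemma closed_discrete_countable {n : ℕ} {S : Set (EuclideanSpace ℂ (Fin n))}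
    (hSclosed : IsClosed S) (hSdiscrete : DiscreteTopology S) : S.Countable := by
  have hcover : S = ⋃ m : ℕ, S ∩ closedBall 0 m := by
    ext x
    constructor
    · intro hx
      obtain ⟨m, hm⟩ := exists_nat_ge ‖x‖
      refine mem_iUnion.mpr ⟨m, hx, ?_⟩
      rw [mem_closedBall, dist_zero_right]
      exact hm
    · intro hx
      obtain ⟨m, hm, -⟩ := mem_iUnion.mp hx
      exact hm
  rw [hcover]
  apply Set.countable_iUnion
  intro m
  have hcpt : IsCompact (S ∩ closedBall 0 m) :=
    (isCompact_closedBall _ _).inter_left hSclosed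
  have hdisc : DiscreteTopology ↥(S ∩ closedBall 0 m) :=
    DiscreteTopology.of_subset hSdiscrete Set.inter_subset_left
  exact (hcpt.finite (isDiscrete_iff_discreteTopology.mpr hdisc)).countable

end helpers
end PDA

end
open PDA Metric Set Filter Bornology
set_option maxHeartbeats 2000000 in
/-- approximation of a holomorphic disc, avoiding a closed discrete set off a
relatively compact open subset `V` of the disc, by a proper holomorphic disc with the same
avoidance property. -/
theorem proper_disc_approximation_avoiding_closed_discrete
    (n : ℕ) (hn : 2 ≤ n)
    (S : Set (EuclideanSpace ℂ (Fin n)))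
    (hSclosed : IsClosed S) (hSdiscrete : DiscreteTopology S)
    (f : ℂ → EuclideanSpace ℂ (Fin n))
    (hf : DifferentiableOn ℂ f (Metric.ball (0 : ℂ) 1))
    (V : Set ℂ) (hVopen : IsOpen V)
    (hVcompact : IsCompact (closure V))
    (hVsub : closure V ⊆ Metric.ball (0 : ℂ) 1)
    (havoid : ∀ ζ ∈ Metric.ball (0 : ℂ) 1 \ V, f ζ ∉ S)
    (ε : ℝ) (hε : 0 < ε) :
    ∃ (lam : ℝ) (g : ℂ → EuclideanSpace ℂ (Fin n)),
      0 < lam ∧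
      DifferentiableOn ℂ g (Metric.ball (0 : ℂ) 1) ∧
      ProperOnDisc g ∧
      (∀ ζ ∈ Metric.ball (0 : ℂ) 1 \ V, g ζ ∉ S) ∧
      (∀ ζ ∈ V, ‖g ζ - f ζ‖ < ε) ∧
      g 0 = f 0 ∧
      deriv g 0 = lam • deriv f 0 := by
  classical
  -- two distinct coordinates
  have h01 : (⟨0, by omega⟩ : Fin n) ≠ (⟨1, by omega⟩ : Fin n) := by
    simp [Fin.ext_iff]
  set i0 : Fin n := ⟨0, by omega⟩ with hi0def
  set i1 : Fin n := ⟨1, by omega⟩ with hi1def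
  -- a radius bound for closure V
  have hball : ∀ z : ℂ, z ∈ Metric.ball (0:ℂ) 1 ↔ ‖z‖ < 1 := by
    intro z; rw [mem_ball, dist_zero_right]
  obtain ⟨x0, hx0Kv, hx0max⟩ :=
    (hVcompact.union isCompact_singleton).exists_isMaxOn
    (⟨0, Or.inr rfl⟩ : (closure V ∪ {0}).Nonempty)
    (continuous_norm.continuousOn)
  set ρ : ℝ := ‖x0‖ with hρdef
  have hρ0 : 0 ≤ ρ := norm_nonneg _
  have hρ1 : ρ < 1 := by
    have : x0 ∈ Metric.ball (0:ℂ) 1 := by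
      rcases hx0Kv with h | h
      · exact hVsub h
      · simp only [mem_singleton_iff] at h
        subst h
        exact zero_mem_ball
    rwa [hball] at this
  have hVρ : ∀ z ∈ closure V, ‖z‖ ≤ ρ := fun z hz => hx0max (Or.inl hz)
  set ρ2 : ℝ := (ρ + 1)/2 with hρ2def
  have hρρ2 : ρ ≤ ρ2 := by rw [hρ2def]; linarith
  have hρ21 : ρ2 < 1 := by rw [hρ2def]; linarith
  have hρ20 : 0 ≤ ρ2 := by rw [hρ2def]; linarith
  have hcb2 : closedBall (0:ℂ) ρ2 ⊆ Metric.ball (0:ℂ) 1 := by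
    intro z hz
    rw [mem_closedBall, dist_zero_right] at hz
    rw [hball]
    linarith
  -- uniform continuity on the closed ball of radius ρ2
  have hucont := (isCompact_closedBall (0:ℂ) ρ2).uniformContinuousOn_of_continuous
    (hf.continuousOn.mono hcb2)
  rw [Metric.uniformContinuousOn_iff] at hucont
  obtain ⟨δ, hδ0, hδ⟩ := hucont (ε/3) (by linarith)
  set δ' : ℝ := min δ 1 with hδ'def
  have hδ'0 : 0 < δ' := lt_min hδ0 one_pos
  have hδ'1 : δ' ≤ 1 := min_le_right _ _
  have hδ'δ : δ' ≤ δ := min_le_left _ _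
  set r : ℝ := 1 - δ'/2 with hrdef
  have hr0 : 0 < r := by rw [hrdef]; linarith
  have hr1 : r < 1 := by rw [hrdef]; linarith
  have hrnorm : ‖(r:ℂ)‖ = r := by
    rw [Complex.norm_real, Real.norm_eq_abs, abs_of_pos hr0]
  -- the rescaled map
  set fr : ℂ → EuclideanSpace ℂ (Fin n) := fun ζ => f ((r:ℂ) * ζ) with hfrdef
  have hrz : ∀ z : ℂ, ‖(r:ℂ) * z‖ ≤ ‖z‖ := by
    intro z
    rw [norm_mul, hrnorm]
    nlinarith [norm_nonneg z]
  have hmul_mem : ∀ z ∈ Metric.ball (0:ℂ) 1, (r:ℂ) * z ∈ Metric.ball (0:ℂ) 1 := by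
    intro z hz
    rw [hball] at hz ⊢
    exact lt_of_le_of_lt (hrz z) hz
  have hfr_diff : DifferentiableOn ℂ fr (Metric.ball (0:ℂ) 1) := by
    apply DifferentiableOn.comp (t := Metric.ball (0:ℂ) 1) hf
    · exact ((differentiable_id.const_mul _)).differentiableOn
    · exact hmul_mem
  -- global bound for fr on the disc
  have hrc : closedBall (0:ℂ) r ⊆ Metric.ball (0:ℂ) 1 := by
    intro z hz
    rw [mem_closedBall, dist_zero_right] at hz
    rw [hball]
    linarith
  obtain ⟨M, hM⟩ := (isCompact_closedBall (0:ℂ) r).exists_bound_of_continuousOn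
    (hf.continuousOn.mono hrc)
  have hfrM : ∀ z ∈ Metric.ball (0:ℂ) 1, ‖fr z‖ ≤ M := by
    intro z hz
    rw [hball] at hz
    apply hM
    rw [mem_closedBall, dist_zero_right, norm_mul, hrnorm]
    nlinarith [norm_nonneg z]
  have hM0 : 0 ≤ M := (norm_nonneg _).trans (hfrM 0 zero_mem_ball)
  -- approximation of f by fr on closure V
  have hfrapprox : ∀ ζ ∈ closure V, ‖fr ζ - f ζ‖ < ε/3 := by
    intro ζ hζ
    have hζρ : ‖ζ‖ ≤ ρ := hVρ ζ hζ
    have h1 : (r:ℂ) * ζ ∈ closedBall (0:ℂ) ρ2 := by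
      rw [mem_closedBall, dist_zero_right]
      exact le_trans (hrz ζ) (hζρ.trans hρρ2)
    have h2 : ζ ∈ closedBall (0:ℂ) ρ2 := by
      rw [mem_closedBall, dist_zero_right]
      exact hζρ.trans hρρ2
    have hd : dist ((r:ℂ) * ζ) ζ < δ := by
      rw [dist_eq_norm]
      have : (r:ℂ) * ζ - ζ = ((r - 1 : ℝ) : ℂ) * ζ := by push_cast; ring
      rw [this, norm_mul, Complex.norm_real, Real.norm_eq_abs,
        abs_of_nonpos (by linarith : (r:ℝ) - 1 ≤ 0)]
      have hζ1 : ‖ζ‖ ≤ 1 := hζρ.trans hρ1.le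
      calc -(r - 1) * ‖ζ‖ ≤ -(r-1) * 1 := by
            apply mul_le_mul_of_nonneg_left hζ1 (by linarith)
        _ = δ'/2 := by rw [hrdef]; ring
        _ < δ := by linarith
    have := hδ _ h1 _ h2 hd
    rwa [dist_eq_norm] at this
  -- bounds for phi and psi on closure V
  obtain ⟨Cp, hCp⟩ := hVcompact.exists_bound_of_continuousOn
    (phi_diffOn.continuousOn.mono hVsub)
  obtain ⟨Cq, hCq⟩ := hVcompact.exists_bound_of_continuousOn
    (psi_diffOn.continuousOn.mono hVsub)
  set Cp' : ℝ := max Cp 0 with hCp'def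
  set Cq' : ℝ := max Cq 0 with hCq'def
  set t : ℝ := ε / (3 * (Cp' + Cq' + 1)) with htdef
  have hCp'0 : 0 ≤ Cp' := le_max_right _ _
  have hCq'0 : 0 ≤ Cq' := le_max_right _ _
  have ht0 : 0 < t := by
    rw [htdef]
    positivity
  -- the proper perturbation map
  set v0 : EuclideanSpace ℂ (Fin n) := EuclideanSpace.single i0 1 with hv0def
  set v1 : EuclideanSpace ℂ (Fin n) := EuclideanSpace.single i1 1 with hv1def
  have hv0i0 : v0 i0 = 1 := by rw [hv0def, EuclideanSpace.single_apply, if_pos rfl]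
  have hv0i1 : v0 i1 = 0 := by
    rw [hv0def, EuclideanSpace.single_apply, if_neg (Ne.symm h01)]
  have hv1i0 : v1 i0 = 0 := by rw [hv1def, EuclideanSpace.single_apply, if_neg h01]
  have hv1i1 : v1 i1 = 1 := by rw [hv1def, EuclideanSpace.single_apply, if_pos rfl]
  set h : ℂ → EuclideanSpace ℂ (Fin n) := fun ζ => phi ζ • v0 + psi ζ • v1 with hhdef
  have hh_coord0 : ∀ ζ, h ζ i0 = phi ζ := by
    intro ζ
    rw [hhdef]
    simp only [PiLp.add_apply, PiLp.smul_apply, hv0i0, hv1i0, smul_eq_mul]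
    ring
  have hh_coord1 : ∀ ζ, h ζ i1 = psi ζ := by
    intro ζ
    rw [hhdef]
    simp only [PiLp.add_apply, PiLp.smul_apply, hv0i1, hv1i1, smul_eq_mul]
    ring
  have hh_diff : DifferentiableOn ℂ h (Metric.ball (0:ℂ) 1) :=
    (phi_diffOn.smul_const v0).add (psi_diffOn.smul_const v1)
  -- scalar coordinate functions
  set F0 : ℂ → ℂ := fun ζ => fr ζ i0 + (t:ℂ) * phi ζ with hF0def
  set F1 : ℂ → ℂ := fun ζ => fr ζ i1 + (t:ℂ) * psi ζ with hF1def
  have hF0diff : DifferentiableOn ℂ F0 (Metric.ball (0:ℂ) 1) := by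
    apply DifferentiableOn.add
    · exact ((EuclideanSpace.proj i0).differentiable.comp_differentiableOn hfr_diff)
    · exact (phi_diffOn.const_mul _)
  -- unboundedness of F0
  have hub : ∀ C : ℝ, ∃ z ∈ Metric.ball (0:ℂ) 1, C < ‖F0 z‖ := by
    intro C
    set m : ℕ := 2 * (Nat.ceil ((C + M + 1)/t) + 1) with hmdef
    have hm1 : 1 ≤ m := by omega
    have hme : Even m := even_two_mul _
    set z : ℂ := ((u m : ℝ) : ℂ) with hzdef
    have hznorm : ‖z‖ = u m := by
      rw [hzdef, Complex.norm_real, Real.norm_eq_abs, abs_of_nonneg (u_nonneg m)]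
    have hzB : z ∈ Metric.ball (0:ℂ) 1 := by
      rw [hball, hznorm]
      exact u_lt_one m
    have hphi : (m:ℝ) ≤ ‖phi z‖ := phi_big hm1 hme
    have hmge : (C + M + 1)/t ≤ (m:ℝ) := by
      calc (C + M + 1)/t ≤ (Nat.ceil ((C + M + 1)/t) : ℝ) := Nat.le_ceil _
        _ ≤ (m:ℝ) := by
          have hc : (0:ℝ) ≤ (Nat.ceil ((C + M + 1)/t) : ℝ) := Nat.cast_nonneg _
          rw [hmdef]
          push_cast
          linarith
    have htm : C + M + 1 ≤ t * m := by
      rw [div_le_iff₀ ht0] at hmge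
      linarith
    refine ⟨z, hzB, ?_⟩
    have hlow : t * m - M ≤ ‖F0 z‖ := by
      have hco : ‖fr z i0‖ ≤ M := (coord_le _ _).trans (hfrM z hzB)
      have htphi : t * m ≤ ‖(t:ℂ) * phi z‖ := by
        rw [norm_mul, Complex.norm_real, Real.norm_eq_abs, abs_of_pos ht0]
        exact mul_le_mul_of_nonneg_left hphi ht0.le
      have := norm_sub_norm_le ((t:ℂ) * phi z) (-(fr z i0))
      rw [norm_neg, sub_neg_eq_add] at this
      have hF0z : F0 z = (t:ℂ) * phi z + fr z i0 := by rw [hF0def]; ring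
      rw [← hF0z] at this
      linarith
    linarith
  -- countability considerations
  have hScount : S.Countable := closed_discrete_countable hSclosed hSdiscrete
  have hAcount : ∀ s : EuclideanSpace ℂ (Fin n),
      {z | z ∈ Metric.ball (0:ℂ) 1 ∧ F0 z = s i0}.Countable :=
    fun s => fiber_countable hF0diff hub (s i0)
  set W : Set ℂ := ⋃ s ∈ S, (fun ζ : ℂ => (s i1 - F1 ζ)/ζ^2) ''
    {z | z ∈ Metric.ball (0:ℂ) 1 ∧ F0 z = s i0} with hWdef
  have hW : W.Countable := hScount.biUnion (fun s _ => ((hAcount s).image _))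
  have hwex : ∃ w : ℂ, ‖w‖ < ε/3 ∧ w ∉ W := by
    by_contra hc
    push_neg at hc
    have hsub : Complex.ofReal '' (Set.Ioo 0 (ε/3)) ⊆ W := by
      rintro - ⟨x, hx, rfl⟩
      apply hc
      rw [Complex.norm_real, Real.norm_eq_abs, abs_of_pos hx.1]
      exact hx.2
    have hIoo : (Set.Ioo (0:ℝ) (ε/3)).Countable := by
      have himg : (Complex.ofReal '' (Set.Ioo 0 (ε/3))).Countable := hW.mono hsub
      have := himg.preimage Complex.ofReal_injective
      exact this.mono (Set.subset_preimage_image _ _)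
    have hcard := Cardinal.mk_Ioo_real (show (0:ℝ) < ε/3 by linarith)
    have := hIoo.le_aleph0
    rw [hcard] at this
    exact absurd this (not_le.mpr Cardinal.aleph0_lt_continuum)
  obtain ⟨w, hwsmall, hwW⟩ := hwex
  -- the candidate map
  set g : ℂ → EuclideanSpace ℂ (Fin n) :=
    fun ζ => fr ζ + t • h ζ + (w * ζ^2) • v1 with hgdef
  have hg_coord0 : ∀ ζ, g ζ i0 = F0 ζ := by
    intro ζ
    rw [hgdef, hF0def]
    simp only [PiLp.add_apply, PiLp.smul_apply, hh_coord0, hv1i0, smul_eq_mul, mul_zero,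
      add_zero, Complex.real_smul]
  have hg_coord1 : ∀ ζ, g ζ i1 = F1 ζ + w * ζ^2 := by
    intro ζ
    rw [hgdef, hF1def]
    simp only [PiLp.add_apply, PiLp.smul_apply, hh_coord1, hv1i1, smul_eq_mul, mul_one,
      Complex.real_smul]
  -- g is holomorphic
  have hg_diff : DifferentiableOn ℂ g (Metric.ball (0:ℂ) 1) := by
    apply DifferentiableOn.add
    apply DifferentiableOn.add hfr_diff
    · exact hh_diff.const_smul t
    · exact (((differentiable_pow 2).const_mul w).differentiableOn).smul_const v1
  -- value at 0
  have hh0 : h 0 = 0 := by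
    rw [hhdef]
    simp only [phi_zero, psi_zero, zero_smul, add_zero]
  have hg0 : g 0 = f 0 := by
    rw [hgdef]
    simp only [hh0, smul_zero, mul_zero, zero_pow, zero_smul, add_zero, ne_eq,
      OfNat.ofNat_ne_zero, not_false_eq_true]
    rw [hfrdef]
    norm_num
  -- avoidance of S
  have havoidg : ∀ ζ ∈ Metric.ball (0:ℂ) 1 \ V, g ζ ∉ S := by
    intro ζ hζ hgS
    by_cases hz0 : ζ = 0
    · subst hz0
      rw [hg0] at hgS
      exact havoid 0 hζ hgS
    · apply hwW
      rw [hWdef]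
      refine mem_iUnion₂.mpr ⟨g ζ, hgS, ⟨ζ, ⟨hζ.1, (hg_coord0 ζ).symm⟩, ?_⟩⟩
      rw [hg_coord1 ζ]
      field_simp
      ring
  -- approximation on V
  have happrox : ∀ ζ ∈ V, ‖g ζ - f ζ‖ < ε := by
    intro ζ hζ
    have hζcl : ζ ∈ closure V := subset_closure hζ
    have hζB : ζ ∈ Metric.ball (0:ℂ) 1 := hVsub hζcl
    have hζ1 : ‖ζ‖ ≤ 1 := ((hball ζ).mp hζB).le
    have hsplit : g ζ - f ζ = (fr ζ - f ζ) + (t • h ζ + (w * ζ^2) • v1) := by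
      simp only [hgdef]; abel
    have hnv1 : ‖v1‖ = 1 := by
      rw [hv1def, EuclideanSpace.norm_single, norm_one]
    have hterm3 : ‖(w * ζ^2) • v1‖ < ε/3 := by
      rw [norm_smul, hnv1, mul_one, norm_mul, norm_pow]
      calc ‖w‖ * ‖ζ‖^2 ≤ ‖w‖ * 1 := by
            apply mul_le_mul_of_nonneg_left _ (norm_nonneg w)
            exact pow_le_one₀ (norm_nonneg ζ) hζ1
        _ = ‖w‖ := mul_one _
        _ < ε/3 := hwsmall
    have hterm2 : ‖t • h ζ‖ < ε/3 := by
      rw [norm_smul, Real.norm_eq_abs, abs_of_pos ht0]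
      have hhb : ‖h ζ‖ ≤ Cp' + Cq' := by
        rw [hhdef]
        calc ‖phi ζ • v0 + psi ζ • v1‖ ≤ ‖phi ζ • v0‖ + ‖psi ζ • v1‖ := norm_add_le _ _
          _ = ‖phi ζ‖ + ‖psi ζ‖ := by
              rw [norm_smul, norm_smul, hnv1, hv0def, EuclideanSpace.norm_single, norm_one,
                mul_one, mul_one]
          _ ≤ Cp' + Cq' := by
              have h1 : ‖phi ζ‖ ≤ Cp' := (hCp ζ hζcl).trans (le_max_left _ _)
              have h2 : ‖psi ζ‖ ≤ Cq' := (hCq ζ hζcl).trans (le_max_left _ _)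
              linarith
      calc t * ‖h ζ‖ ≤ t * (Cp' + Cq') :=
            mul_le_mul_of_nonneg_left hhb ht0.le
        _ < ε/3 := by
            rw [htdef]
            rw [div_mul_eq_mul_div, div_lt_div_iff₀ (by positivity) (by norm_num)]
            nlinarith
    have hterm1 : ‖fr ζ - f ζ‖ < ε/3 := hfrapprox ζ hζcl
    calc ‖g ζ - f ζ‖ ≤ ‖fr ζ - f ζ‖ + ‖t • h ζ + (w * ζ^2) • v1‖ := by
          rw [hsplit]; exact norm_add_le _ _
      _ ≤ ‖fr ζ - f ζ‖ + (‖t • h ζ‖ + ‖(w * ζ^2) • v1‖) := by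
          have := norm_add_le (t • h ζ) ((w * ζ^2) • v1)
          linarith
      _ < ε/3 + (ε/3 + ε/3) := by linarith
      _ = ε := by ring
  -- properness
  have hproper : ProperOnDisc g := by
    intro K hK
    obtain ⟨R, hR⟩ := hK.isBounded.subset_closedBall 0
    have hR0 : 0 ≤ R ∨ True := Or.inr trivial
    set m : ℕ := max 1 (Nat.ceil ((R + M + ε/3 + 1)/t)) with hmdef
    have hm1 : 1 ≤ m := le_max_left _ _
    have hmge : (R + M + ε/3 + 1)/t ≤ (m:ℝ) := by
      calc (R + M + ε/3 + 1)/t ≤ (Nat.ceil ((R + M + ε/3 + 1)/t) : ℝ) := Nat.le_ceil _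
        _ ≤ (m:ℝ) := by
          have := le_max_right 1 (Nat.ceil ((R + M + ε/3 + 1)/t))
          exact_mod_cast this
    have htm : R + M + ε/3 + 1 ≤ t * m := by
      rw [div_le_iff₀ ht0] at hmge
      linarith
    have hbig : ∀ z ∈ Metric.ball (0:ℂ) 1, u m ≤ ‖z‖ → R < ‖g z‖ := by
      intro z hzB hzm
      have hz1 : ‖z‖ < 1 := (hball z).mp hzB
      have hmax := pair_large hz1 hm1 hzm
      have hth : t * max ‖phi z‖ ‖psi z‖ ≤ ‖t • h z‖ := by
        rw [norm_smul, Real.norm_eq_abs, abs_of_pos ht0]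
        apply mul_le_mul_of_nonneg_left _ ht0.le
        apply max_le
        · rw [← hh_coord0 z]; exact coord_le _ _
        · rw [← hh_coord1 z]; exact coord_le _ _
      have hterm3 : ‖(w * z^2) • v1‖ ≤ ε/3 := by
        rw [norm_smul, hv1def, EuclideanSpace.norm_single, norm_one, mul_one,
          norm_mul, norm_pow]
        calc ‖w‖ * ‖z‖^2 ≤ ‖w‖ * 1 := by
              apply mul_le_mul_of_nonneg_left _ (norm_nonneg w)
              exact pow_le_one₀ (norm_nonneg z) hz1.le
          _ = ‖w‖ := mul_one _
          _ ≤ ε/3 := hwsmall.le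
      have hfrb : ‖fr z‖ ≤ M := hfrM z hzB
      have hsplit : t • h z = g z - fr z - (w * z^2) • v1 := by
        simp only [hgdef]; abel
      have hnorm : ‖t • h z‖ ≤ ‖g z‖ + ‖fr z‖ + ‖(w * z^2) • v1‖ := by
        rw [hsplit]
        calc ‖g z - fr z - (w * z^2) • v1‖ ≤ ‖g z - fr z‖ + ‖(w * z^2) • v1‖ :=
              norm_sub_le _ _
          _ ≤ ‖g z‖ + ‖fr z‖ + ‖(w * z^2) • v1‖ := by
              have := norm_sub_le (g z) (fr z)
              linarith
      have hchain : R + M + ε/3 + 1 ≤ t * max ‖phi z‖ ‖psi z‖ := by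
        calc R + M + ε/3 + 1 ≤ t * m := htm
          _ ≤ t * max ‖phi z‖ ‖psi z‖ := mul_le_mul_of_nonneg_left hmax ht0.le
      linarith
    have hEq : {ζ : ℂ | ζ ∈ Metric.ball (0:ℂ) 1 ∧ g ζ ∈ K} =
        closedBall (0:ℂ) (u m) ∩ g ⁻¹' K := by
      ext ζ
      constructor
      · rintro ⟨h1, h2⟩
        refine ⟨?_, h2⟩
        rw [mem_closedBall, dist_zero_right]
        by_contra hgt
        push_neg at hgt
        have := hbig ζ h1 hgt.le
        have hle : ‖g ζ‖ ≤ R := by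
          have := hR h2
          rwa [mem_closedBall, dist_zero_right] at this
        linarith
      · rintro ⟨h1, h2⟩
        refine ⟨?_, h2⟩
        rw [mem_closedBall, dist_zero_right] at h1
        rw [hball]
        exact lt_of_le_of_lt h1 (u_lt_one m)
    rw [hEq]
    apply IsCompact.of_isClosed_subset (isCompact_closedBall (0:ℂ) (u m))
    · apply ContinuousOn.preimage_isClosed_of_isClosed
      · apply hg_diff.continuousOn.mono
        intro z hz
        rw [mem_closedBall, dist_zero_right] at hz
        rw [hball]
        exact lt_of_le_of_lt hz (u_lt_one m)
      · exact isClosed_closedBall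
      · exact hK.isClosed
    · exact Set.inter_subset_left
  -- derivative at 0
  have hfd0 : DifferentiableAt ℂ f 0 :=
    hf.differentiableAt (isOpen_ball.mem_nhds zero_mem_ball)
  have hfr' : HasDerivAt fr ((r:ℂ) • deriv f 0) 0 := by
    have hinner : HasDerivAt (fun z : ℂ => (r:ℂ) * z) ((r:ℂ)) 0 := by
      simpa using (hasDerivAt_id (0:ℂ)).const_mul (r:ℂ)
    have houter : HasDerivAt f (deriv f 0) ((r:ℂ) * 0) := by
      rw [mul_zero]
      exact hfd0.hasDerivAt
    exact houter.scomp 0 hinner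
  have hh' : HasDerivAt h 0 0 := by
    have h1 : HasDerivAt (fun ζ => phi ζ • v0) ((0:ℂ) • v0) 0 := phi_deriv.smul_const v0
    have h2 : HasDerivAt (fun ζ => psi ζ • v1) ((0:ℂ) • v1) 0 := psi_deriv.smul_const v1
    have := h1.fun_add h2
    rw [hhdef]
    simpa using this
  have hth' : HasDerivAt (fun ζ => t • h ζ) 0 0 := by
    have := hh'.fun_const_smul t
    simpa using this
  have hw' : HasDerivAt (fun ζ : ℂ => (w * ζ^2) • v1) 0 0 := by
    have hscal : HasDerivAt (fun ζ : ℂ => w * ζ^2) (w * (2 * 0^1)) 0 :=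
      (hasDerivAt_pow 2 (0:ℂ)).const_mul w
    have := hscal.smul_const v1
    simpa using this
  have hg' : HasDerivAt g ((r:ℂ) • deriv f 0) 0 := by
    have := (hfr'.fun_add hth').fun_add hw'
    rw [hgdef]
    simpa using this
  refine ⟨r, g, hr0, hg_diff, hproper, havoidg, happrox, hg0, ?_⟩
  rw [hg'.deriv]
  rw [← algebraMap_smul ℂ r (deriv f 0), Complex.coe_algebraMap]
end

section
/- Let n ≥ 2 and let f : closure(𝔻) → ℂⁿ be a continuous map that is holomorphic on 𝔻. For any real numbers 0 < r < 1, ε > 0 and N, and any finite set A ⊆ 𝔻, there exists a continuous map g : closure(𝔻) → ℂⁿ, holomorphic on 𝔻, satisfying: (i) ‖g(ζ)‖² > N for every ζ with |ζ| = 1; (ii) ‖g(ζ)‖² > ‖f(ζ)‖² − ε for every ζ with |ζ| ≤ 1; (iii) ‖f(ζ) − g(ζ)‖ < ε for every ζ with |ζ| ≤ r; (iv) g(ζ) = f(ζ) and g'(ζ) = f'(ζ) for every ζ ∈ A. -/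
open Metric Complex Polynomial Finset

noncomputable def Complex.abs : AbsoluteValue ℂ ℝ where
  toFun z := ‖z‖
  map_mul' := norm_mul
  nonneg' := norm_nonneg
  eq_zero' _ := norm_eq_zero
  add_le' := norm_add_le

@[simp] lemma Complex.abs_apply (z : ℂ) : Complex.abs z = ‖z‖ := rfl

lemma Complex.norm_eq_abs (z : ℂ) : ‖z‖ = Complex.abs z := rfl

lemma Complex.abs_ofReal (x : ℝ) : Complex.abs (x : ℂ) = |x| := by simp

lemma Complex.abs_conj (z : ℂ) : Complex.abs ((starRingEnd ℂ) z) = Complex.abs z := by simp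

lemma Complex.continuous_abs : Continuous Complex.abs := continuous_norm



lemma polyApprox {h : ℂ → ℂ} (hc : ContinuousOn h (Metric.closedBall 0 1))
    (hd : DifferentiableOn ℂ h (Metric.ball 0 1)) {s : ℝ} (hs : 0 < s) :
    ∃ q : Polynomial ℂ, ∀ ζ ∈ Metric.closedBall (0:ℂ) 1, Complex.abs (h ζ - q.eval ζ) < s := by
  have hcomp : IsCompact (Metric.closedBall (0:ℂ) 1) := isCompact_closedBall 0 1
  have huc : UniformContinuousOn h (Metric.closedBall 0 1) :=
    hcomp.uniformContinuousOn_of_continuous hc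
  rw [Metric.uniformContinuousOn_iff] at huc
  obtain ⟨δ, hδ, hδ'⟩ := huc (s/2) (by linarith)
  set t : ℝ := max (1 - δ/2) (1/2) with ht_def
  have ht0 : (1:ℝ)/2 ≤ t := le_max_right _ _
  have ht1 : t < 1 := max_lt (by linarith) (by norm_num)
  have htpos : 0 < t := by linarith
  have hgap : 1 - t < δ := by
    rcases le_or_gt (1 - δ/2) (1/2) with h1 | h1
    · have : t = 1/2 := max_eq_right h1
      rw [this]; linarith
    · have : t = 1 - δ/2 := max_eq_left h1.le
      rw [this]; linarith
  -- the dilated function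
  set F : ℂ → ℂ := fun z => h ((t:ℂ) * z) with hF_def
  set T : ℝ := (1 + 1/t)/2 with hT_def
  have hT1 : 1 < T := by
    have : 1 < 1/t := one_lt_one_div htpos ht1
    simp only [hT_def]; linarith
  have hTt : T * t < 1 := by
    have h2 : T < 1/t := by
      have : 1 < 1/t := one_lt_one_div htpos ht1
      simp only [hT_def]; linarith
    calc T * t < (1/t) * t := by exact mul_lt_mul_of_pos_right h2 htpos
    _ = 1 := by field_simp
  set R : NNReal := ⟨T, by positivity⟩ with hR_def
  have hFd : DifferentiableOn ℂ F (Metric.closedBall 0 R) := by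
    apply DifferentiableOn.comp (t := Metric.ball (0:ℂ) 1) hd
    · exact ((differentiable_const ((t:ℂ))).mul differentiable_id).differentiableOn
    · intro z hz
      simp only [Metric.mem_closedBall, Metric.mem_ball, dist_zero_right] at hz ⊢
      have : ‖(t:ℂ) * z‖ = t * ‖z‖ := by
        rw [norm_mul]
        simp [Complex.norm_real, abs_of_pos htpos]
      rw [this]
      calc t * ‖z‖ ≤ t * T := by
            apply mul_le_mul_of_nonneg_left _ htpos.le
            exact hz
      _ < 1 := by rw [mul_comm]; exact hTt
  have hRpos : 0 < R := by
    rw [← NNReal.coe_lt_coe]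
    exact (show (0:ℝ) < T by linarith)
  have hps := hFd.hasFPowerSeriesOnBall hRpos
  set p := cauchyPowerSeries F 0 R with hp_def
  set r' : NNReal := ⟨(1+T)/2, by positivity⟩ with hr'_def
  have hr'R : ((r' : NNReal) : ENNReal) < ((R:NNReal) : ENNReal) := by
    rw [ENNReal.coe_lt_coe, ← NNReal.coe_lt_coe]
    exact (show (1+T)/2 < T by linarith)
  have htu := hps.tendstoUniformlyOn hr'R
  rw [Metric.tendstoUniformlyOn_iff] at htu
  have := htu (s/2) (by linarith)
  rw [Filter.eventually_atTop] at this
  obtain ⟨nn, hnn⟩ := this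
  have hkey : ∀ ζ ∈ Metric.ball (0:ℂ) r', dist (F ζ) (p.partialSum nn ζ) < s/2 := by
    intro ζ hζ
    have := hnn nn le_rfl ζ hζ
    simpa [dist_comm] using this
  refine ⟨∑ k ∈ Finset.range nn, Polynomial.C (p.coeff k) * Polynomial.X ^ k, ?_⟩
  intro ζ hζ
  have hζ1 : Complex.abs ζ ≤ 1 := by simpa [Complex.dist_eq] using hζ
  have heval : Polynomial.eval ζ (∑ k ∈ Finset.range nn, Polynomial.C (p.coeff k) * Polynomial.X ^ k)
      = p.partialSum nn ζ := by
    rw [Polynomial.eval_finset_sum]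
    simp only [Polynomial.eval_mul, Polynomial.eval_C, Polynomial.eval_pow, Polynomial.eval_X]
    rw [FormalMultilinearSeries.partialSum]
    congr 1
    ext k
    rw [FormalMultilinearSeries.apply_eq_pow_smul_coeff]
    rw [smul_eq_mul]; ring
  rw [heval]
  have h1 : Complex.abs (h ζ - F ζ) < s/2 := by
    have hmem : (t:ℂ) * ζ ∈ Metric.closedBall (0:ℂ) 1 := by
      simp only [Metric.mem_closedBall, dist_zero_right]
      rw [norm_mul]
      have : ‖(t:ℂ)‖ = t := by simp [Complex.norm_real, abs_of_pos htpos]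
      rw [this]
      calc t * ‖ζ‖ ≤ t * 1 := mul_le_mul_of_nonneg_left hζ1 htpos.le
      _ ≤ 1 := by linarith
    have hdist : dist ζ ((t:ℂ)*ζ) < δ := by
      rw [Complex.dist_eq, Complex.norm_eq_abs]
      have : ζ - (t:ℂ)*ζ = (1 - (t:ℂ)) * ζ := by ring
      rw [this, map_mul]
      have h1t : Complex.abs (1 - (t:ℂ)) = 1 - t := by
        rw [show (1 - (t:ℂ)) = ((1 - t : ℝ) : ℂ) by push_cast; ring]
        rw [Complex.abs_ofReal]; exact _root_.abs_of_nonneg (by linarith)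
      rw [h1t]
      calc (1-t) * Complex.abs ζ ≤ (1-t) * 1 := by
            apply mul_le_mul_of_nonneg_left hζ1 (by linarith)
      _ < δ := by linarith
    have := hδ' ζ hζ ((t:ℂ)*ζ) hmem hdist
    rwa [Complex.dist_eq] at this
  have h2 : Complex.abs (F ζ - p.partialSum nn ζ) < s/2 := by
    have hmem : ζ ∈ Metric.ball (0:ℂ) r' := by
      simp only [Metric.mem_ball, dist_zero_right]
      have : (r' : ℝ) = (1+T)/2 := rfl
      rw [Complex.norm_eq_abs, this]; linarith
    have := hkey ζ hmem
    rwa [Complex.dist_eq] at this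
  calc Complex.abs (h ζ - _) = Complex.abs ((h ζ - F ζ) + (F ζ - p.partialSum nn ζ)) := by ring_nf
  _ ≤ Complex.abs (h ζ - F ζ) + Complex.abs (F ζ - p.partialSum nn ζ) := Complex.abs.add_le _ _
  _ < s/2 + s/2 := add_lt_add h1 h2
  _ = s := by ring


noncomputable def conjRev (q : Polynomial ℂ) (d : ℕ) (ζ : ℂ) : ℂ :=
  ∑ k ∈ Finset.range (d+1), (starRingEnd ℂ) (q.coeff k) * ζ^(d-k)

lemma conjRev_diff (q : Polynomial ℂ) (d : ℕ) : Differentiable ℂ (conjRev q d) := by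
  unfold conjRev
  apply Differentiable.fun_sum
  intro k _
  exact (differentiable_const _).mul (differentiable_pow _)

lemma conjRev_circle {q : Polynomial ℂ} {d : ℕ} (hq : q.natDegree ≤ d) {ζ : ℂ}
    (hζ : Complex.abs ζ = 1) :
    conjRev q d ζ = ζ^d * (starRingEnd ℂ) (q.eval ζ) := by
  have hζ0 : ζ ≠ 0 := by
    intro h; rw [h] at hζ; simp at hζ
  have hinv : (starRingEnd ℂ) ζ = ζ⁻¹ := by
    field_simp
    rw [mul_comm, Complex.mul_conj]
    norm_cast
    rw [Complex.normSq_eq_norm_sq, Complex.norm_eq_abs, hζ]; norm_num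
  rw [Polynomial.eval_eq_sum_range' (Nat.lt_succ_of_le hq), map_sum, Finset.mul_sum]
  unfold conjRev
  apply Finset.sum_congr rfl
  intro k hk
  rw [Finset.mem_range] at hk
  have hkd : k ≤ d := Nat.lt_succ_iff.mp hk
  rw [map_mul, map_pow, hinv]
  rw [pow_sub₀ ζ hζ0 hkd, inv_pow]
  ring

lemma conjRev_abs_circle {q : Polynomial ℂ} {d : ℕ} (hq : q.natDegree ≤ d) {ζ : ℂ}
    (hζ : Complex.abs ζ = 1) :
    Complex.abs (conjRev q d ζ) = Complex.abs (q.eval ζ) := by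
  rw [conjRev_circle hq hζ, map_mul, map_pow, hζ, one_pow, one_mul, Complex.abs_conj]


variable {n : ℕ}

noncomputable def vecU (i₀ i₁ : Fin n) (a b : ℂ) : EuclideanSpace ℂ (Fin n) :=
  a • EuclideanSpace.single i₀ (1:ℂ) + b • EuclideanSpace.single i₁ (1:ℂ)

lemma vecU_inner (i₀ i₁ : Fin n) (a b : ℂ) (x : EuclideanSpace ℂ (Fin n)) :
    (inner ℂ x (vecU i₀ i₁ a b) : ℂ) = a * (starRingEnd ℂ) (x i₀) + b * (starRingEnd ℂ) (x i₁) := by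
  unfold vecU
  rw [inner_add_right, inner_smul_right, inner_smul_right,
    EuclideanSpace.inner_single_right, EuclideanSpace.inner_single_right]
  ring

lemma vecU_norm_sq (i₀ i₁ : Fin n) (hne : i₀ ≠ i₁) (a b : ℂ) :
    ‖vecU i₀ i₁ a b‖^2 = Complex.abs a^2 + Complex.abs b^2 := by
  unfold vecU
  rw [norm_add_sq (𝕜 := ℂ)]
  rw [inner_smul_right, inner_smul_left, EuclideanSpace.inner_single_left]
  simp only [EuclideanSpace.single_apply, if_neg hne, map_one, one_mul, mul_zero, map_zero,
    zero_mul]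
  rw [norm_smul, norm_smul]
  simp

lemma vecU_diff (i₀ i₁ : Fin n) {q1 q2 : ℂ → ℂ} (h1 : Differentiable ℂ q1)
    (h2 : Differentiable ℂ q2) :
    Differentiable ℂ (fun ζ => vecU i₀ i₁ (q1 ζ) (q2 ζ)) := by
  unfold vecU
  exact (h1.smul_const _).add (h2.smul_const _)

noncomputable def QA (A : Finset ℂ) : Polynomial ℂ := ∏ a ∈ A, (Polynomial.X - Polynomial.C a)^2

lemma QA_eval_zero {A : Finset ℂ} {a : ℂ} (ha : a ∈ A) : (QA A).eval a = 0 := by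
  unfold QA
  rw [Polynomial.eval_prod]
  apply Finset.prod_eq_zero ha
  simp

lemma QA_deriv_zero {A : Finset ℂ} {a : ℂ} (ha : a ∈ A) : (QA A).derivative.eval a = 0 := by
  unfold QA
  rw [← Finset.mul_prod_erase A _ ha]
  rw [Polynomial.derivative_mul]
  rw [Polynomial.eval_add, Polynomial.eval_mul, Polynomial.eval_mul]
  have h1 : Polynomial.eval a ((Polynomial.X - Polynomial.C a)^2) = 0 := by simp
  have h2 : Polynomial.eval a (Polynomial.derivative ((Polynomial.X - Polynomial.C a)^2)) = 0 := by
    rw [Polynomial.derivative_pow]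
    simp
  rw [h1, h2]
  ring

lemma QA_lower {A : Finset ℂ} (hA : ↑A ⊆ Metric.ball (0:ℂ) 1) {ζ : ℂ}
    (hζ : Complex.abs ζ = 1) :
    (∏ a ∈ A, (1 - Complex.abs a)^2) ≤ Complex.abs ((QA A).eval ζ) := by
  unfold QA
  rw [Polynomial.eval_prod, map_prod]
  apply Finset.prod_le_prod
  · intro a ha
    have : Complex.abs a < 1 := by
      have := hA ha
      simpa [Metric.mem_ball, Complex.dist_eq] using this
    positivity
  · intro a ha
    have ha1 : Complex.abs a < 1 := by
      have := hA ha
      simpa [Metric.mem_ball, Complex.dist_eq] using this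
    rw [Polynomial.eval_pow, map_pow]
    apply pow_le_pow_left₀ (by linarith)
    simp only [Polynomial.eval_sub, Polynomial.eval_X, Polynomial.eval_C]
    calc 1 - Complex.abs a = Complex.abs ζ - Complex.abs a := by rw [hζ]
    _ ≤ Complex.abs (ζ - a) := by
        have h2 := Complex.abs.add_le (ζ - a) a
        simp only [sub_add_cancel] at h2
        linarith

lemma QA_pos {A : Finset ℂ} (hA : ↑A ⊆ Metric.ball (0:ℂ) 1) :
    0 < ∏ a ∈ A, (1 - Complex.abs a)^2 := by
  apply Finset.prod_pos
  intro a ha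
  have h : Complex.abs a < 1 := by
    have := hA ha
    simpa [Metric.mem_ball, Complex.dist_eq] using this
  have : 0 < 1 - Complex.abs a := by linarith
  positivity


lemma annulus_small {G : ℂ → ℂ} (hG : Continuous G)
    (hzero : ∀ ζ : ℂ, Complex.abs ζ = 1 → G ζ = 0) {η : ℝ} (hη : 0 < η) {r : ℝ} (hr : r < 1) :
    ∃ t : ℝ, r ≤ t ∧ t < 1 ∧
      ∀ ζ : ℂ, t ≤ Complex.abs ζ → Complex.abs ζ ≤ 1 → Complex.abs (G ζ) ≤ η := by
  set K : Set ℂ := Metric.closedBall 0 1 ∩ {ζ | η ≤ Complex.abs (G ζ)} with hK_def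
  have hKc : IsCompact K := by
    apply (isCompact_closedBall (0:ℂ) 1).inter_right
    exact isClosed_le continuous_const (Complex.continuous_abs.comp hG)
  rcases K.eq_empty_or_nonempty with hKe | hKne
  · refine ⟨max r 0, le_max_left _ _, max_lt hr zero_lt_one, ?_⟩
    intro ζ h1 h2
    by_contra hcon
    push_neg at hcon
    have : ζ ∈ K := by
      constructor
      · simpa [Metric.mem_closedBall, Complex.dist_eq] using h2
      · exact le_of_lt hcon
    rw [hKe] at this
    exact this
  · obtain ⟨z₀, hz₀K, hmax⟩ := hKc.exists_isMaxOn hKne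
      (Complex.continuous_abs.continuousOn)
    have hz₀lt : Complex.abs z₀ < 1 := by
      rcases lt_or_eq_of_le (show Complex.abs z₀ ≤ 1 by
        simpa [Metric.mem_closedBall, Complex.dist_eq] using hz₀K.1) with h | h
      · exact h
      · exfalso
        have := hz₀K.2
        rw [Set.mem_setOf_eq, hzero z₀ h] at this
        simp at this
        linarith
    refine ⟨max r ((1 + Complex.abs z₀)/2), le_max_left _ _, ?_, ?_⟩
    · apply max_lt hr; linarith
    · intro ζ h1 h2
      by_contra hcon
      push_neg at hcon
      have hζK : ζ ∈ K :=
        ⟨by simpa [Metric.mem_closedBall, Complex.dist_eq] using h2, le_of_lt hcon⟩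
      have := hmax hζK
      simp only [Set.mem_setOf_eq] at this
      have h3 : (1 + Complex.abs z₀)/2 ≤ Complex.abs ζ := le_trans (le_max_right _ _) h1
      linarith

lemma zero_free_pair (P₁ P₂ : Polynomial ℂ) {s : ℝ} (hs : 0 < s) :
    ∃ w₁ w₂ : ℂ, Complex.abs w₁ ≤ s ∧ Complex.abs w₂ ≤ s ∧
      ∀ ζ : ℂ, Complex.abs ζ = 1 →
        ¬((P₁ + Polynomial.C w₁).eval ζ = 0 ∧ (P₂ + Polynomial.C w₂).eval ζ = 0) := by
  set w₁ : ℂ := if P₁ = 0 then (s:ℂ) else 0 with hw₁_def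
  have hp₁ne : P₁ + Polynomial.C w₁ ≠ 0 := by
    rcases eq_or_ne P₁ 0 with h | h
    · rw [hw₁_def, if_pos h, h, zero_add]
      simp only [ne_eq, Polynomial.C_eq_zero]
      exact_mod_cast hs.ne'
    · rwa [hw₁_def, if_neg h, map_zero, add_zero]
  have hw₁abs : Complex.abs w₁ ≤ s := by
    rw [hw₁_def]
    split
    · simp [Complex.abs_ofReal, abs_of_pos hs]
    · simp; linarith
  set bad : Finset ℂ := (P₁ + Polynomial.C w₁).roots.toFinset.image
    (fun z => -(P₂.eval z)) with hbad_def
  have hball : (Metric.ball (0:ℂ) s).Infinite := by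
    apply infinite_of_mem_nhds (0:ℂ)
    exact Metric.ball_mem_nhds 0 hs
  obtain ⟨w₂, hw₂⟩ := (hball.diff bad.finite_toSet).nonempty
  refine ⟨w₁, w₂, hw₁abs, ?_, ?_⟩
  · have := hw₂.1
    simp only [Metric.mem_ball, Complex.dist_eq, sub_zero] at this
    exact this.le
  · rintro ζ hζ ⟨h1, h2⟩
    have hroot : ζ ∈ (P₁ + Polynomial.C w₁).roots.toFinset := by
      rw [Multiset.mem_toFinset, Polynomial.mem_roots hp₁ne]
      exact h1
    have : -(P₂.eval ζ) ∈ bad := Finset.mem_image_of_mem _ hroot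
    have hw₂ne : w₂ ≠ -(P₂.eval ζ) := by
      intro h
      exact hw₂.2 (h ▸ this)
    apply hw₂ne
    rw [Polynomial.eval_add, Polynomial.eval_C] at h2
    linear_combination h2


lemma sqrt2_bound {a b x : ℝ} (ha : 0 ≤ a) (hb : 0 ≤ b) (hx : 0 ≤ x) (h : x^2 = a^2 + b^2) :
    a + b ≤ Real.sqrt 2 * x := by
  nlinarith [Real.sq_sqrt (show (0:ℝ) ≤ 2 by norm_num), Real.sqrt_nonneg 2, sq_nonneg (a-b),
    sq_nonneg (Real.sqrt 2 * x - (a+b)), mul_nonneg (Real.sqrt_nonneg 2) hx]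

lemma le_of_sq_le {c x : ℝ} (hc : 0 ≤ c) (hx : 0 ≤ x) (h : c^2 ≤ x^2) : c ≤ x := by
  nlinarith

lemma abs_sub_le'' (x y : ℂ) : Complex.abs (x - y) ≤ Complex.abs x + Complex.abs y := by
  simpa [sub_eq_add_neg] using Complex.abs.add_le x (-y)


lemma re_ge_neg_abs (z : ℂ) : -Complex.abs z ≤ z.re := by
  have h1 := Complex.abs_re_le_norm z
  have h2 := neg_abs_le z.re
  linarith [abs_nonneg z.re, Complex.abs_apply z]

lemma final_sphere {σ Np N fsq rterm x : ℝ} (hσ : 0 ≤ σ) (hNp : 0 ≤ Np)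
    (hNp2 : Np^2 = max N 0) (hx : 2*σ + 1 + Np ≤ x) (hrt : -(σ * x) ≤ rterm) (hfsq : 0 ≤ fsq) :
    N < fsq + 2*rterm + x^2 := by
  have hN : N ≤ max N 0 := le_max_left _ _
  have hw : 0 ≤ x - (2*σ+1+Np) := by linarith
  nlinarith [mul_nonneg hσ hNp, mul_nonneg hw hσ, mul_nonneg hw hNp, mul_nonneg hw hw]

lemma quad_lb (s x : ℝ) : -(2*s^2) ≤ x^2 - 2*(Real.sqrt 2 * s)*x := by
  nlinarith [sq_nonneg (x - Real.sqrt 2 * s), Real.sq_sqrt (show (0:ℝ) ≤ 2 by norm_num)]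

set_option maxHeartbeats 1000000 in
/-- the Forstnerič–Globevnik push-out theorem specialized to `X = ℂⁿ` with the
strongly plurisubharmonic exhaustion `ρ(z) = ‖z‖²`: the boundary values of a continuous map
`closure 𝔻 → ℂⁿ`, holomorphic on `𝔻`, can be pushed above any level `N` of `ρ` while almost
not decreasing `ρ` on all of `closure 𝔻`, approximating on `{|ζ| ≤ r}`, and matching the
1-jet of `f` on a finite set `A ⊆ 𝔻`. -/
theorem push_boundary_out_interpolating_jet
    (n : ℕ) (hn : 2 ≤ n)
    (f : ℂ → EuclideanSpace ℂ (Fin n))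
    (hfc : ContinuousOn f (Metric.closedBall (0 : ℂ) 1))
    (hfd : DifferentiableOn ℂ f (Metric.ball (0 : ℂ) 1))
    (r : ℝ) (hr0 : 0 < r) (hr1 : r < 1)
    (ε : ℝ) (hε : 0 < ε)
    (N : ℝ)
    (A : Finset ℂ) (hA : ↑A ⊆ Metric.ball (0 : ℂ) 1) :
    ∃ g : ℂ → EuclideanSpace ℂ (Fin n),
      ContinuousOn g (Metric.closedBall (0 : ℂ) 1) ∧
      DifferentiableOn ℂ g (Metric.ball (0 : ℂ) 1) ∧
      (∀ ζ ∈ Metric.sphere (0 : ℂ) 1, N < ‖g ζ‖ ^ 2) ∧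
      (∀ ζ ∈ Metric.closedBall (0 : ℂ) 1, ‖f ζ‖ ^ 2 - ε < ‖g ζ‖ ^ 2) ∧
      (∀ ζ ∈ Metric.closedBall (0 : ℂ) r, ‖f ζ - g ζ‖ < ε) ∧
      (∀ ζ ∈ A, g ζ = f ζ ∧ deriv g ζ = deriv f ζ) := by
  classical
  have hn0 : 0 < n := by omega
  have hn1 : 1 < n := by omega
  set i₀ : Fin n := ⟨0, hn0⟩ with hi₀
  set i₁ : Fin n := ⟨1, hn1⟩ with hi₁
  have hne : i₀ ≠ i₁ := by simp [hi₀, hi₁, Fin.ext_iff]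
  -- bound on f
  obtain ⟨C₀, hC₀⟩ := (isCompact_closedBall (0:ℂ) 1).exists_bound_of_continuousOn hfc
  set Cf : ℝ := max C₀ 1 with hCf_def
  have hCf1 : (1:ℝ) ≤ Cf := le_max_right _ _
  have hCf : ∀ ζ ∈ Metric.closedBall (0:ℂ) 1, ‖f ζ‖ ≤ Cf :=
    fun ζ hζ => le_trans (hC₀ ζ hζ) (le_max_left _ _)
  -- the small parameter s
  set s : ℝ := Real.sqrt (ε/8) with hs_def
  have hs : 0 < s := Real.sqrt_pos.mpr (by linarith)
  have hs2 : s^2 = ε/8 := Real.sq_sqrt (by linarith)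
  -- coordinates of f
  set f0 : ℂ → ℂ := fun ζ => f ζ i₀ with hf0_def
  set f1 : ℂ → ℂ := fun ζ => f ζ i₁ with hf1_def
  have hproj : ∀ i : Fin n, ContinuousOn (fun ζ => f ζ i) (Metric.closedBall (0:ℂ) 1) ∧
      DifferentiableOn ℂ (fun ζ => f ζ i) (Metric.ball (0:ℂ) 1) := by
    intro i
    constructor
    · exact (EuclideanSpace.proj i).continuous.comp_continuousOn hfc
    · exact (EuclideanSpace.proj i).differentiable.comp_differentiableOn hfd
  -- polynomial approximations
  obtain ⟨P₁, hP₁⟩ := polyApprox (hproj i₀).1 (hproj i₀).2 (show 0 < s/2 by linarith)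
  obtain ⟨P₂, hP₂⟩ := polyApprox (hproj i₁).1 (hproj i₁).2 (show 0 < s/2 by linarith)
  obtain ⟨w₁, w₂, hw₁, hw₂, hzf⟩ := zero_free_pair P₁ P₂ (show 0 < s/2 by linarith)
  set p₁ : Polynomial ℂ := P₁ + Polynomial.C w₁ with hp₁_def
  set p₂ : Polynomial ℂ := P₂ + Polynomial.C w₂ with hp₂_def
  have happ₁ : ∀ ζ ∈ Metric.closedBall (0:ℂ) 1, Complex.abs (f0 ζ - p₁.eval ζ) ≤ s := by
    intro ζ hζ
    have h1 := hP₁ ζ hζ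
    have : f0 ζ - p₁.eval ζ = (f0 ζ - P₁.eval ζ) - w₁ := by
      simp [hp₁_def]; ring
    rw [this]
    calc Complex.abs _ ≤ Complex.abs (f0 ζ - P₁.eval ζ) + Complex.abs w₁ :=
          abs_sub_le'' _ _
    _ ≤ s/2 + s/2 := add_le_add h1.le hw₁
    _ = s := by ring
  have happ₂ : ∀ ζ ∈ Metric.closedBall (0:ℂ) 1, Complex.abs (f1 ζ - p₂.eval ζ) ≤ s := by
    intro ζ hζ
    have h1 := hP₂ ζ hζ
    have heq : f1 ζ - p₂.eval ζ = (f1 ζ - P₂.eval ζ) - w₂ := by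
      simp [hp₂_def]; ring
    rw [heq]
    calc Complex.abs _ ≤ Complex.abs (f1 ζ - P₂.eval ζ) + Complex.abs w₂ :=
          abs_sub_le'' _ _
    _ ≤ s/2 + s/2 := add_le_add h1.le hw₂
    _ = s := by ring
  -- degrees and reversed polynomials
  set d : ℕ := max p₁.natDegree p₂.natDegree with hd_def
  set q₁ : ℂ → ℂ := conjRev p₁ d with hq₁_def
  set q₂ : ℂ → ℂ := conjRev p₂ d with hq₂_def
  -- the direction field u
  set u : ℂ → EuclideanSpace ℂ (Fin n) := fun ζ => vecU i₀ i₁ (q₂ ζ) (-(q₁ ζ)) with hu_def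
  have hu_diff : Differentiable ℂ u := vecU_diff i₀ i₁ (conjRev_diff p₂ d) (conjRev_diff p₁ d).neg
  have hu_norm_sq : ∀ ζ, ‖u ζ‖^2 = Complex.abs (q₂ ζ)^2 + Complex.abs (q₁ ζ)^2 := by
    intro ζ
    rw [hu_def]
    rw [vecU_norm_sq i₀ i₁ hne]
    simp
  -- lower bound c on the sphere
  have hsph_ne : ((1:ℂ)) ∈ Metric.sphere (0:ℂ) 1 := by simp
  obtain ⟨ζc, hζc, hcmin⟩ := (isCompact_sphere (0:ℂ) 1).exists_isMinOn ⟨1, hsph_ne⟩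
    (Continuous.continuousOn (((Complex.continuous_abs.comp p₁.continuous).pow 2).add
      ((Complex.continuous_abs.comp p₂.continuous).pow 2)))
  set c2 : ℝ := Complex.abs (p₁.eval ζc)^2 + Complex.abs (p₂.eval ζc)^2 with hc2_def
  have hc2pos : 0 < c2 := by
    have hζc1 : Complex.abs ζc = 1 := by simpa [Complex.dist_eq] using hζc
    have := hzf ζc hζc1
    rcases eq_or_ne (p₁.eval ζc) 0 with h1 | h1
    · rcases eq_or_ne (p₂.eval ζc) 0 with h2 | h2
      · exact absurd ⟨h1, h2⟩ this
      · have : 0 < Complex.abs (p₂.eval ζc) := by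
          simpa [AbsoluteValue.pos_iff] using h2
        positivity
    · have : 0 < Complex.abs (p₁.eval ζc) := by
        simpa [AbsoluteValue.pos_iff] using h1
      positivity
  set c : ℝ := Real.sqrt c2 with hc_def
  have hcpos : 0 < c := Real.sqrt_pos.mpr hc2pos
  have hc_sq : c^2 = c2 := Real.sq_sqrt hc2pos.le
  have hu_sphere : ∀ ζ : ℂ, Complex.abs ζ = 1 → c ≤ ‖u ζ‖ := by
    intro ζ hζ
    have h1 : c2 ≤ ‖u ζ‖^2 := by
      rw [hu_norm_sq ζ]
      rw [hq₁_def, hq₂_def, conjRev_abs_circle (le_trans (le_max_left _ _) (le_refl d)) hζ,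
        conjRev_abs_circle (le_trans (le_max_right _ _) (le_refl d)) hζ]
      have := hcmin (show ζ ∈ Metric.sphere (0:ℂ) 1 by simpa [Complex.dist_eq] using hζ)
      simp only [Set.mem_setOf_eq, Function.comp_apply, Pi.add_apply, Pi.pow_apply] at this
      rw [hc2_def]
      linarith [this]
    exact le_of_sq_le hcpos.le (norm_nonneg _) (by linarith [hc_sq])
  -- upper bound Cu for u
  obtain ⟨Cu₀, hCu₀⟩ := (isCompact_closedBall (0:ℂ) 1).exists_bound_of_continuousOn
    hu_diff.continuous.continuousOn
  set Cu : ℝ := max Cu₀ 1 with hCu_def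
  have hCu1 : (1:ℝ) ≤ Cu := le_max_right _ _
  have hCu : ∀ ζ ∈ Metric.closedBall (0:ℂ) 1, ‖u ζ‖ ≤ Cu :=
    fun ζ hζ => le_trans (hCu₀ ζ hζ) (le_max_left _ _)
  -- the function G, vanishing on the circle
  set G : ℂ → ℂ := fun ζ =>
    (starRingEnd ℂ) (p₁.eval ζ) * q₂ ζ - (starRingEnd ℂ) (p₂.eval ζ) * q₁ ζ with hG_def
  have hGcont : Continuous G := by
    apply Continuous.sub
    · exact (Complex.continuous_conj.comp (Polynomial.continuous p₁)).mul (conjRev_diff p₂ d).continuous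
    · exact (Complex.continuous_conj.comp (Polynomial.continuous p₂)).mul (conjRev_diff p₁ d).continuous
  have hGzero : ∀ ζ : ℂ, Complex.abs ζ = 1 → G ζ = 0 := by
    intro ζ hζ
    rw [hG_def]
    simp only
    rw [hq₁_def, hq₂_def, conjRev_circle (le_max_left _ _) hζ, conjRev_circle (le_max_right _ _) hζ]
    ring
  -- bounds for QA
  set qmin : ℝ := ∏ a ∈ A, (1 - Complex.abs a)^2 with hqmin_def
  have hqminpos : 0 < qmin := QA_pos hA
  obtain ⟨Cq₀, hCq₀⟩ := (isCompact_closedBall (0:ℂ) 1).exists_bound_of_continuousOn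
    ((QA A).continuous.continuousOn (s := Metric.closedBall 0 1))
  set qmax : ℝ := max Cq₀ 1 with hqmax_def
  have hqmax1 : (1:ℝ) ≤ qmax := le_max_right _ _
  have hqmax : ∀ ζ ∈ Metric.closedBall (0:ℂ) 1, Complex.abs ((QA A).eval ζ) ≤ qmax := by
    intro ζ hζ
    have := hCq₀ ζ hζ
    rw [Complex.norm_eq_abs] at this
    exact le_trans this (le_max_left _ _)
  -- choice of R
  set Np : ℝ := Real.sqrt (max N 0) with hNp_def
  have hNp0 : 0 ≤ Np := Real.sqrt_nonneg _
  have hNp2 : Np^2 = max N 0 := Real.sq_sqrt (le_max_right _ _)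
  set R : ℝ := (2*Real.sqrt 2*s + 1 + Np) / (qmin * c) with hR_def
  have hsqrt2 : (0:ℝ) < Real.sqrt 2 := by positivity
  have hRpos : 0 < R := by
    apply div_pos (by positivity) (by positivity)
  have hRK : R * (qmin * c) = 2*Real.sqrt 2*s + 1 + Np := by
    rw [hR_def]
    field_simp
  -- choice of η and t
  set η : ℝ := ε / (4*(R*qmax+1)) with hη_def
  have hηpos : 0 < η := by
    apply div_pos hε (by positivity)
  obtain ⟨t, htr, ht1, htG⟩ := annulus_small hGcont hGzero hηpos hr1
  have ht0 : 0 < t := lt_of_lt_of_le hr0 htr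
  -- choice of m
  set εm : ℝ := min (ε/(4*Cf)) (ε/2) / (R*qmax*Cu + 1) with hεm_def
  have hεmpos : 0 < εm := by
    apply div_pos (lt_min (by positivity) (by linarith)) (by positivity)
  obtain ⟨m, hm⟩ := exists_pow_lt_of_lt_one hεmpos ht1
  -- the perturbation
  set ρ : ℂ → ℂ := fun ζ => (R:ℂ) * ζ^m * (QA A).eval ζ with hρ_def
  have hρ_diff : Differentiable ℂ ρ :=
    ((differentiable_const _).mul (differentiable_pow m)).mul (QA A).differentiable
  set W : ℂ → EuclideanSpace ℂ (Fin n) := fun ζ => ρ ζ • u ζ with hW_def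
  have hW_diff : Differentiable ℂ W := hρ_diff.smul hu_diff
  set g : ℂ → EuclideanSpace ℂ (Fin n) := fun ζ => f ζ + W ζ with hg_def
  -- basic identities
  have hWnorm : ∀ ζ, ‖W ζ‖ = Complex.abs (ρ ζ) * ‖u ζ‖ := by
    intro ζ
    rw [hW_def]
    simp only
    rw [norm_smul, Complex.norm_eq_abs]
  have habsρ : ∀ ζ, Complex.abs (ρ ζ) = R * Complex.abs ζ ^ m * Complex.abs ((QA A).eval ζ) := by
    intro ζ
    rw [hρ_def]
    simp only
    rw [map_mul, map_mul, map_pow, Complex.abs_ofReal, abs_of_pos hRpos]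
  -- Δ and the inner product decomposition
  set Δ : ℂ → ℂ := fun ζ =>
    (starRingEnd ℂ) (f0 ζ - p₁.eval ζ) * q₂ ζ - (starRingEnd ℂ) (f1 ζ - p₂.eval ζ) * q₁ ζ
    with hΔ_def
  have hinner : ∀ ζ, (inner ℂ (f ζ) (W ζ) : ℂ) = ρ ζ * (Δ ζ + G ζ) := by
    intro ζ
    rw [hW_def]
    simp only
    rw [inner_smul_right]
    rw [hu_def]
    simp only
    rw [vecU_inner]
    rw [hΔ_def, hG_def]
    simp only [map_sub]
    rw [hf0_def, hf1_def]
    ring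
  have hΔbound : ∀ ζ ∈ Metric.closedBall (0:ℂ) 1,
      Complex.abs (Δ ζ) ≤ Real.sqrt 2 * s * ‖u ζ‖ := by
    intro ζ hζ
    have h1 := happ₁ ζ hζ
    have h2 := happ₂ ζ hζ
    have ha : Complex.abs (Δ ζ) ≤
        Complex.abs (f0 ζ - p₁.eval ζ) * Complex.abs (q₂ ζ)
        + Complex.abs (f1 ζ - p₂.eval ζ) * Complex.abs (q₁ ζ) := by
      rw [hΔ_def]
      simp only
      calc Complex.abs _ ≤ Complex.abs ((starRingEnd ℂ) (f0 ζ - p₁.eval ζ) * q₂ ζ)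
            + Complex.abs ((starRingEnd ℂ) (f1 ζ - p₂.eval ζ) * q₁ ζ) := by
            exact abs_sub_le'' _ _
      _ = _ := by rw [map_mul, map_mul, Complex.abs_conj, Complex.abs_conj]
    have hq1 : 0 ≤ Complex.abs (q₁ ζ) := Complex.abs.nonneg _
    have hq2 : 0 ≤ Complex.abs (q₂ ζ) := Complex.abs.nonneg _
    have husq := hu_norm_sq ζ
    have hun : 0 ≤ ‖u ζ‖ := norm_nonneg _
    have hsum : Complex.abs (q₂ ζ) + Complex.abs (q₁ ζ) ≤ Real.sqrt 2 * ‖u ζ‖ :=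
      sqrt2_bound hq2 hq1 hun husq
    calc Complex.abs (Δ ζ) ≤ Complex.abs (f0 ζ - p₁.eval ζ) * Complex.abs (q₂ ζ)
        + Complex.abs (f1 ζ - p₂.eval ζ) * Complex.abs (q₁ ζ) := ha
    _ ≤ s * Complex.abs (q₂ ζ) + s * Complex.abs (q₁ ζ) := by
        apply add_le_add (mul_le_mul_of_nonneg_right h1 hq2) (mul_le_mul_of_nonneg_right h2 hq1)
    _ = s * (Complex.abs (q₂ ζ) + Complex.abs (q₁ ζ)) := by ring
    _ ≤ s * (Real.sqrt 2 * ‖u ζ‖) := mul_le_mul_of_nonneg_left hsum hs.le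
    _ = Real.sqrt 2 * s * ‖u ζ‖ := by ring
  -- norm expansion
  have hexpand : ∀ ζ, ‖g ζ‖^2 = ‖f ζ‖^2 + 2*(inner ℂ (f ζ) (W ζ) : ℂ).re + ‖W ζ‖^2 := by
    intro ζ
    rw [hg_def]
    simp only
    rw [@norm_add_sq ℂ _ _ _ _ (f ζ) (W ζ)]
    norm_num
  -- upper bound for |rho| on the closed ball
  have habsρUB : ∀ ζ ∈ Metric.closedBall (0:ℂ) 1, Complex.abs (ρ ζ) ≤ R * qmax := by
    intro ζ hζ
    have h1 : Complex.abs ζ ≤ 1 := by simpa [Complex.dist_eq] using hζ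
    rw [habsρ ζ]
    have h2 : Complex.abs ζ ^ m ≤ 1 := pow_le_one₀ (Complex.abs.nonneg ζ) h1
    have h3 := hqmax ζ hζ
    have h4 : R * Complex.abs ζ ^ m ≤ R * 1 := by
      apply mul_le_mul_of_nonneg_left h2 hRpos.le
    calc R * Complex.abs ζ ^ m * Complex.abs ((QA A).eval ζ)
        ≤ (R * 1) * qmax := by
          apply mul_le_mul h4 h3 (Complex.abs.nonneg _) (by positivity)
    _ = R * qmax := by ring
  -- smallness of W near the origin
  set δ₀ : ℝ := min (ε/(4*Cf)) (ε/2) with hδ₀_def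
  have hδ₀pos : 0 < δ₀ := lt_min (by positivity) (by linarith)
  have hWsmall : ∀ ζ : ℂ, Complex.abs ζ ≤ t → ‖W ζ‖ ≤ δ₀ := by
    intro ζ hζt
    have hζ1 : Complex.abs ζ ≤ 1 := le_trans hζt ht1.le
    have hζcb : ζ ∈ Metric.closedBall (0:ℂ) 1 := by
      simpa [Complex.dist_eq] using hζ1
    have h1 : Complex.abs ζ ^ m ≤ t ^ m := pow_le_pow_left₀ (Complex.abs.nonneg ζ) hζt m
    have h2 : Complex.abs (ρ ζ) ≤ R * t^m * qmax := by
      rw [habsρ ζ]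
      apply mul_le_mul (mul_le_mul_of_nonneg_left h1 hRpos.le) (hqmax ζ hζcb)
        (Complex.abs.nonneg _) (by positivity)
    have h3 : ‖W ζ‖ ≤ (R * qmax * Cu) * t^m := by
      rw [hWnorm ζ]
      calc Complex.abs (ρ ζ) * ‖u ζ‖ ≤ (R * t^m * qmax) * Cu := by
            apply mul_le_mul h2 (hCu ζ hζcb) (norm_nonneg _) (by positivity)
      _ = (R * qmax * Cu) * t^m := by ring
    have h4 : (R * qmax * Cu) * t^m ≤ (R * qmax * Cu + 1) * t^m := by
      apply mul_le_mul_of_nonneg_right _ (pow_nonneg ht0.le m)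
      linarith
    have h5 : (R * qmax * Cu + 1) * t^m ≤ (R * qmax * Cu + 1) * εm := by
      apply mul_le_mul_of_nonneg_left hm.le (by positivity)
    have hne6 : R * qmax * Cu + 1 ≠ 0 := by positivity
    have h6 : (R * qmax * Cu + 1) * εm = δ₀ := by
      rw [hεm_def]
      field_simp
    linarith
  -- the answer
  refine ⟨g, ?_, ?_, ?_, ?_, ?_, ?_⟩
  · exact hfc.add hW_diff.continuous.continuousOn
  · exact hfd.add hW_diff.differentiableOn
  · -- boundary push-out
    intro ζ hζ
    have hζ1 : Complex.abs ζ = 1 := by simpa [Complex.dist_eq] using hζ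
    have hζcb : ζ ∈ Metric.closedBall (0:ℂ) 1 := by simp [Complex.dist_eq, show ‖ζ‖ = 1 from hζ1]
    have hG0 : G ζ = 0 := hGzero ζ hζ1
    have hIn : (inner ℂ (f ζ) (W ζ) : ℂ) = ρ ζ * Δ ζ := by
      rw [hinner ζ, hG0, add_zero]
    have habsIn : Complex.abs (ρ ζ * Δ ζ) ≤ Real.sqrt 2 * s * ‖W ζ‖ := by
      rw [map_mul]
      calc Complex.abs (ρ ζ) * Complex.abs (Δ ζ)
          ≤ Complex.abs (ρ ζ) * (Real.sqrt 2 * s * ‖u ζ‖) := by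
            apply mul_le_mul_of_nonneg_left (hΔbound ζ hζcb) (Complex.abs.nonneg _)
      _ = Real.sqrt 2 * s * (Complex.abs (ρ ζ) * ‖u ζ‖) := by ring
      _ = Real.sqrt 2 * s * ‖W ζ‖ := by rw [hWnorm ζ]
    have hre : -(Real.sqrt 2 * s * ‖W ζ‖) ≤ (inner ℂ (f ζ) (W ζ) : ℂ).re := by
      rw [hIn]
      have := re_ge_neg_abs (ρ ζ * Δ ζ)
      linarith
    have hWlb : 2*Real.sqrt 2*s + 1 + Np ≤ ‖W ζ‖ := by
      rw [← hRK, hWnorm ζ, habsρ ζ, hζ1, one_pow, mul_one]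
      have h1 : qmin ≤ Complex.abs ((QA A).eval ζ) := QA_lower hA hζ1
      have h2 : c ≤ ‖u ζ‖ := hu_sphere ζ hζ1
      calc R * (qmin * c) = (R * qmin) * c := by ring
      _ ≤ (R * Complex.abs ((QA A).eval ζ)) * ‖u ζ‖ := by
          apply mul_le_mul (mul_le_mul_of_nonneg_left h1 hRpos.le) h2 hcpos.le
          positivity
    rw [hexpand ζ]
    exact final_sphere (by positivity) hNp0 hNp2
      (by linarith [hWlb]) hre (sq_nonneg ‖f ζ‖)
  · -- interior almost-monotonicity
    intro ζ hζcb
    have hζ1 : Complex.abs ζ ≤ 1 := by simpa [Complex.dist_eq] using hζcb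
    rw [hexpand ζ]
    rcases le_or_gt (Complex.abs ζ) t with hin | hout
    · -- inner region
      have hWs := hWsmall ζ hin
      have hδ₁ : δ₀ ≤ ε/(4*Cf) := min_le_left _ _
      have hre : -(Cf * ‖W ζ‖) ≤ (inner ℂ (f ζ) (W ζ) : ℂ).re := by
        have h1 := re_ge_neg_abs (inner ℂ (f ζ) (W ζ) : ℂ)
        have h2 : Complex.abs (inner ℂ (f ζ) (W ζ) : ℂ) ≤ ‖f ζ‖ * ‖W ζ‖ := by
          rw [← Complex.norm_eq_abs]
          exact norm_inner_le_norm (f ζ) (W ζ)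
        have h3 : ‖f ζ‖ * ‖W ζ‖ ≤ Cf * ‖W ζ‖ :=
          mul_le_mul_of_nonneg_right (hCf ζ hζcb) (norm_nonneg _)
        linarith
      have h4 : Cf * ‖W ζ‖ ≤ Cf * (ε/(4*Cf)) := by
        apply mul_le_mul_of_nonneg_left _ (by linarith)
        linarith
      have h5 : Cf * (ε/(4*Cf)) = ε/4 := by
        field_simp
      linarith only [hre, h4, h5, sq_nonneg ‖W ζ‖, hε]
    · -- annulus region
      have hGs : Complex.abs (G ζ) ≤ η := htG ζ hout.le hζ1
      have habsIn : Complex.abs (inner ℂ (f ζ) (W ζ) : ℂ)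
          ≤ Real.sqrt 2 * s * ‖W ζ‖ + R*qmax*η := by
        rw [hinner ζ, map_mul]
        have h1 : Complex.abs (Δ ζ + G ζ) ≤ Real.sqrt 2 * s * ‖u ζ‖ + η := by
          calc Complex.abs (Δ ζ + G ζ) ≤ Complex.abs (Δ ζ) + Complex.abs (G ζ) :=
                Complex.abs.add_le _ _
          _ ≤ Real.sqrt 2 * s * ‖u ζ‖ + η := add_le_add (hΔbound ζ hζcb) hGs
        calc Complex.abs (ρ ζ) * Complex.abs (Δ ζ + G ζ)
            ≤ Complex.abs (ρ ζ) * (Real.sqrt 2 * s * ‖u ζ‖ + η) := by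
              apply mul_le_mul_of_nonneg_left h1 (Complex.abs.nonneg _)
        _ = Real.sqrt 2 * s * (Complex.abs (ρ ζ) * ‖u ζ‖) + Complex.abs (ρ ζ) * η := by ring
        _ ≤ Real.sqrt 2 * s * ‖W ζ‖ + R*qmax*η := by
            rw [hWnorm ζ]
            have := mul_le_mul_of_nonneg_right (habsρUB ζ hζcb) hηpos.le
            linarith
      have hre : -(Real.sqrt 2 * s * ‖W ζ‖ + R*qmax*η) ≤ (inner ℂ (f ζ) (W ζ) : ℂ).re := by
        have := re_ge_neg_abs (inner ℂ (f ζ) (W ζ) : ℂ)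
        linarith
      have hq := quad_lb s ‖W ζ‖
      have hRqη : R*qmax*η ≤ ε/4 := by
        have hRq : (0:ℝ) ≤ R*qmax := by positivity
        have hne0 : R*qmax+1 ≠ 0 := by positivity
        have h1 : R*qmax*η ≤ (R*qmax+1)*η := by
          apply mul_le_mul_of_nonneg_right (by linarith only [hRq]) hηpos.le
        have h2 : (R*qmax+1)*η = ε/4 := by
          rw [hη_def]
          field_simp
        linarith only [h1, h2]
      have hs2' : 2*s^2 ≤ ε/4 := by rw [hs2]; linarith
      linarith only [hre, hq, hRqη, hs2', hε]
  · -- approximation on the small disc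
    intro ζ hζ
    have hζr : Complex.abs ζ ≤ r := by simpa [Complex.dist_eq] using hζ
    have hfg : f ζ - g ζ = -(W ζ) := by
      rw [hg_def]
      simp
    rw [hfg, norm_neg]
    have := hWsmall ζ (le_trans hζr htr)
    have hδ₂ : δ₀ ≤ ε/2 := min_le_right _ _
    linarith
  · -- jet interpolation
    intro a ha
    have haball : a ∈ Metric.ball (0:ℂ) 1 := hA ha
    have hρa : ρ a = 0 := by
      rw [hρ_def]
      simp [QA_eval_zero ha]
    have hWa : W a = 0 := by
      rw [hW_def]
      simp [hρa]
    have hfa : DifferentiableAt ℂ f a := hfd.differentiableAt (isOpen_ball.mem_nhds haball)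
    constructor
    · rw [hg_def]
      simp [hWa]
    · have hderiv_add : deriv g a = deriv f a + deriv W a := by
        rw [hg_def]
        exact deriv_add hfa (hW_diff a)
      have hdρ : deriv ρ a = 0 := by
        have hd1 : DifferentiableAt ℂ (fun ζ : ℂ => (R:ℂ) * ζ^m) a :=
          (differentiableAt_const _).mul (differentiableAt_pow m)
        have hd2 : DifferentiableAt ℂ (fun ζ : ℂ => (QA A).eval ζ) a :=
          (QA A).differentiableAt
        rw [hρ_def]
        have : (fun ζ : ℂ => (R:ℂ) * ζ^m * (QA A).eval ζ)
            = fun ζ : ℂ => ((R:ℂ) * ζ^m) * (QA A).eval ζ := rfl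
        rw [this, deriv_fun_mul hd1 hd2]
        rw [Polynomial.deriv]
        rw [QA_eval_zero ha, QA_deriv_zero ha]
        ring
      have hdW : deriv W a = 0 := by
        rw [hW_def]
        rw [deriv_fun_smul (hρ_diff a) (hu_diff a)]
        rw [hρa, hdρ]
        simp
      rw [hderiv_add, hdW, add_zero]
end
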